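/- arXiv:1604.08125 — 12 statements merged into one kernel-verified Lean document; each statement's English description precedes it below -/
import Mathlib

section
/- For every natural number n ≥ 1 it holds that ln(n) / (H_{n+1} − 1) ≤ 1 + (20/29)·(5/6 − γ), where H_m = sum_{i=1}^m 1/i is the m-th harmonic number and γ is the Euler–Mascheroni constant. -/
set_option maxHeartbeats 1600000
open Real

/-- For every `n ≥ 1`,
`ln n / (H_{n+1} - 1) ≤ 1 + (20/29) * (5/6 - γ)`, where `H_m = ∑_{i=1}^m 1/i` is the `m`-th
harmonic number and `γ` is the Euler–Mascheroni constant. -/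
theorem log_div_harmonic_le (n : ℕ) (hn : 1 ≤ n) :
    Real.log n / ((∑ i ∈ Finset.range (n + 1), (1 : ℝ) / (i + 1)) - 1)
      ≤ 1 + (20 / 29) * (5 / 6 - Real.eulerMascheroniConstant) := by
  set γ := Real.eulerMascheroniConstant with hγdef
  -- the sum is the harmonic number
  have hsum : ∑ i ∈ Finset.range (n + 1), (1 : ℝ) / (i + 1) = (harmonic (n + 1) : ℝ) := by
    rw [harmonic]
    push_cast
    simp [one_div]
  -- monotonicity of harmonic numbers
  have hmono : ∀ a b : ℕ, a ≤ b → (harmonic a : ℝ) ≤ (harmonic b : ℝ) := by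
    intro a b hab
    have : harmonic a ≤ harmonic b := by
      unfold harmonic
      apply Finset.sum_le_sum_of_subset_of_nonneg (Finset.range_subset_range.2 hab)
      intro i _ _
      positivity
    exact_mod_cast this
  -- numeric bounds for γ
  have hlog64 : Real.log 64 = 6 * Real.log 2 := by
    rw [show (64 : ℝ) = 2 ^ 6 by norm_num, Real.log_pow]
    norm_num
  have h63 : (harmonic 63 : ℝ) = 310559566510213034489743057 / 65681493561267903750631200 := by
    norm_num [harmonic, Finset.sum_range_succ]
  have h64 : (harmonic 64 : ℝ) = 623171679694215690971693339 / 131362987122535807501262400 := by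
    norm_num [harmonic, Finset.sum_range_succ]
  have hg1 : (0.5693 : ℝ) < γ := by
    have h := Real.eulerMascheroniSeq_lt_eulerMascheroniConstant 63
    rw [Real.eulerMascheroniSeq] at h
    have he : ((63 : ℕ) : ℝ) + 1 = 64 := by norm_num
    rw [he, hlog64, h63] at h
    have := Real.log_two_lt_d9
    linarith
  have hg2 : γ < (0.5851 : ℝ) := by
    have h := Real.eulerMascheroniConstant_lt_eulerMascheroniSeq' 64
    rw [Real.eulerMascheroniSeq', if_neg (by norm_num)] at h
    have he : ((64 : ℕ) : ℝ) = 64 := by norm_num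
    rw [he, hlog64, h64] at h
    have := Real.log_two_gt_d9
    linarith
  -- log n < harmonic n - γ
  have hlog : Real.log n < (harmonic n : ℝ) - γ := by
    have h := Real.eulerMascheroniConstant_lt_eulerMascheroniSeq' n
    rw [Real.eulerMascheroniSeq', if_neg (by omega)] at h
    linarith
  -- positivity of the denominator
  have hpos : (0 : ℝ) < (harmonic (n + 1) : ℝ) - 1 := by
    have := hmono 2 (n + 1) (by omega)
    have h2 : (harmonic 2 : ℝ) = 3 / 2 := by
      norm_num [harmonic, Finset.sum_range_succ]
    linarith
  -- the key inequality
  have hsucc : (harmonic (n + 1) : ℝ) = (harmonic n : ℝ) + 1 / (n + 1) := by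
    rw [harmonic_succ]
    push_cast
    ring
  have key : (harmonic n : ℝ) - γ ≤
      (1 + (20 / 29) * (5 / 6 - γ)) * ((harmonic (n + 1) : ℝ) - 1) := by
    rcases le_or_gt n 17 with h17 | h17
    · interval_cases n <;>
      · norm_num [harmonic, Finset.sum_range_succ]
        nlinarith [hg1, hg2]
    · have ha : (harmonic 18 : ℝ) ≤ (harmonic n : ℝ) := hmono 18 n (by omega)
      have h18 : (harmonic 18 : ℝ) = 14274301 / 4084080 := by
        norm_num [harmonic, Finset.sum_range_succ]
      rw [hsucc]
      have hd : (0 : ℝ) < 1 / ((n : ℝ) + 1) := by positivity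
      have hC : (0 : ℝ) < 1 + (20 / 29) * (5 / 6 - γ) := by linarith
      nlinarith [mul_nonneg (by rw [h18] at ha; linarith : (0 : ℝ) ≤ (harmonic n : ℝ) - 3.49)
          (by linarith : (0 : ℝ) ≤ 50 / 87 - (20 / 29) * γ),
        mul_pos hC hd]
  rw [hsum, div_le_iff₀ hpos]
  nlinarith [key, hlog, hpos, hg1, hg2]
end

section
/- For every natural number n ≥ 2 it holds that (1 − γ − 1/n)/(H_n − 1) ≤ (1 − γ − 1/6)/(H_6 − 1) = (20/29)·(5/6 − γ); that is, the supremum over n ≥ 2 of (1 − γ − 1/n)/(H_n − 1) is attained at n = 6 and equals (20/29)·(5/6 − γ). -/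
/-!
Clearing denominators, with `a = 1 - γ` the claim is
`(a - 1/n) (H₆ - 1) ≤ (a - 1/6) (H_n - 1)`. Passing from `n` to `n + 1` raises the right side by
`(a - 1/6)/(n + 1)` and the left side by `(29/20)/(n(n + 1))`, so for `n ≥ 6` an induction from
the equality at `n = 6` only needs `γ < 71/120`. The cases `n = 2, …, 5` are linear inequalities
in `γ`, the sharpest being `n = 5`, which amounts to `163/300 ≤ γ`. Both bounds on `γ` follow from
the two monotone sequences `H_n - log (n + 1) ↗ γ` and `H_n - log n ↘ γ` at `n = 15` and `n = 64`.
-/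

open Real

lemma eulerMascheroniConstant_gt_163_div_300 : (163 : ℝ) / 300 < eulerMascheroniConstant := by
  have h := eulerMascheroniSeq_lt_eulerMascheroniConstant 15
  have hH : (harmonic 15 : ℝ) = 1195757 / 360360 := by
    norm_num [harmonic, Finset.sum_range_succ]
  have hlog : log ((15 : ℕ) + 1) = 4 * log 2 := by
    rw [show ((15 : ℕ) : ℝ) + 1 = 2 ^ 4 by norm_num, log_pow]; norm_num
  rw [eulerMascheroniSeq, hH, hlog] at h
  linarith [log_two_lt_d9]

lemma eulerMascheroniConstant_lt_71_div_120 : eulerMascheroniConstant < 71 / 120 := by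
  have h := eulerMascheroniConstant_lt_eulerMascheroniSeq' 64
  have hH : (harmonic 64 : ℝ) = 623171679694215690971693339 / 131362987122535807501262400 := by
    norm_num [harmonic, Finset.sum_range_succ]
  have hlog : log (64 : ℕ) = 6 * log 2 := by
    rw [show ((64 : ℕ) : ℝ) = 2 ^ 6 by norm_num, log_pow]; norm_num
  rw [eulerMascheroniSeq', if_neg (by norm_num), hH, hlog] at h
  linarith [log_two_gt_d9]

lemma sum_range_one_div_eq_harmonic (n : ℕ) :
    ∑ i ∈ Finset.range n, (1 : ℝ) / (i + 1) = harmonic n := by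
  simp [harmonic]

lemma harmonic_six : harmonic 6 = 49 / 20 := by
  norm_num [harmonic, Finset.sum_range_succ]

lemma one_lt_harmonic {n : ℕ} (hn : 2 ≤ n) : 1 < harmonic n := by
  induction n, hn using Nat.le_induction with
  | base => norm_num [harmonic, Finset.sum_range_succ]
  | succ n _ ih => rw [harmonic_succ]; linarith [show (0 : ℚ) < (↑(n + 1))⁻¹ by positivity]

lemma sub_one_div_mul_le_of_six_le {a : ℝ} (ha : 49 / 120 ≤ a) {n : ℕ} (hn : 6 ≤ n) :
    (a - 1 / n) * (harmonic 6 - 1) ≤ (a - 1 / 6) * (harmonic n - 1) := by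
  induction n, hn using Nat.le_induction with
  | base => norm_num
  | succ n hn ih =>
    have hn' : (6 : ℝ) ≤ n := by exact_mod_cast hn
    have step : 29 / 20 * (1 / n - 1 / (n + 1)) ≤ (a - 1 / 6) * (1 / (n + 1)) := by
      have : 29 / 20 * (1 / (n : ℝ) - 1 / (n + 1)) = 29 / (20 * n) * (1 / (n + 1)) := by
        field_simp; ring
      rw [this]
      gcongr
      calc 29 / (20 * n) ≤ (29 : ℝ) / (20 * 6) := by gcongr
        _ ≤ a - 1 / 6 := by linarith
    rw [harmonic_six] at ih ⊢
    rw [harmonic_succ]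
    push_cast at ih ⊢
    rw [← one_div]
    linarith

lemma sub_one_div_mul_le_of_lt_six {a : ℝ} (ha : a ≤ 137 / 300) {n : ℕ} (hn₂ : 2 ≤ n)
    (hn₆ : n < 6) : (a - 1 / n) * (harmonic 6 - 1) ≤ (a - 1 / 6) * (harmonic n - 1) := by
  interval_cases n <;> norm_num [harmonic, Finset.sum_range_succ] <;> linarith

lemma sub_one_div_div_harmonic_sub_one_le_six {a : ℝ} (ha₁ : 49 / 120 ≤ a) (ha₂ : a ≤ 137 / 300)
    {n : ℕ} (hn : 2 ≤ n) :
    (a - 1 / n) / (harmonic n - 1) ≤ (a - 1 / 6) / (harmonic 6 - 1) := by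
  have hpos : ∀ {m : ℕ}, 2 ≤ m → (0 : ℝ) < harmonic m - 1 := fun hm =>
    sub_pos.2 (by exact_mod_cast one_lt_harmonic hm)
  rw [div_le_div_iff₀ (hpos hn) (hpos (by norm_num))]
  rcases le_or_gt 6 n with h | h
  · exact sub_one_div_mul_le_of_six_le ha₁ h
  · exact sub_one_div_mul_le_of_lt_six ha₂ hn h

/-- For every `n ≥ 2`,
`(1 - γ - 1/n) / (H_n - 1) ≤ (1 - γ - 1/6) / (H_6 - 1)`, and the right-hand side equals
`(20/29) * (5/6 - γ)`; i.e. the supremum over `n ≥ 2` is attained at `n = 6`. -/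
theorem sup_attained_at_six :
    (∀ n : ℕ, 2 ≤ n →
      (1 - Real.eulerMascheroniConstant - 1 / n) /
          ((∑ i ∈ Finset.range n, (1 : ℝ) / (i + 1)) - 1)
        ≤ (1 - Real.eulerMascheroniConstant - 1 / 6) /
            ((∑ i ∈ Finset.range 6, (1 : ℝ) / (i + 1)) - 1))
    ∧ (1 - Real.eulerMascheroniConstant - 1 / 6) /
          ((∑ i ∈ Finset.range 6, (1 : ℝ) / (i + 1)) - 1)
        = (20 / 29) * (5 / 6 - Real.eulerMascheroniConstant) := by
  have hγ₁ := eulerMascheroniConstant_gt_163_div_300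
  have hγ₂ := eulerMascheroniConstant_lt_71_div_120
  simp only [sum_range_one_div_eq_harmonic]
  refine ⟨fun n hn => ?_, ?_⟩
  · exact sub_one_div_div_harmonic_sub_one_le_six (by linarith) (by linarith) hn
  · rw [harmonic_six]; push_cast; ring
end

section
/- Let c = 3/4, p = 1 − e^{−3/4}, and for a natural number n ≥ 1 let k = ⌈log_2(n/c)⌉ − 2 (an integer, possibly negative) and h = k·p/(3p−1) − 4p(1−2p)/(3p−1)^2 + ((1−p)/(3p−1))^2 · (2(1−p)/(1+p))^k. Then (3hc − c)/(H_{n+1} − 1) ≤ 2.965 for all n ≥ 1. -/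
set_option maxHeartbeats 2000000


open Real

section Helpers
open Finset

lemma S50_val : ∑ i ∈ Finset.range 50, (1:ℝ)/(i+1)
    = 13943237577224054960759/3099044504245996706400 := by
  norm_num [Finset.sum_range_succ]

lemma sum_mono (m n : ℕ) (h : m ≤ n) :
    ∑ i ∈ Finset.range m, (1:ℝ)/(i+1) ≤ ∑ i ∈ Finset.range n, (1:ℝ)/(i+1) :=
  Finset.sum_le_sum_of_subset_of_nonneg (Finset.range_subset_range.2 h)
    (fun i _ _ => by positivity)

lemma log_lb (x : ℝ) (hx : 0 < x) : 1 - 1/x ≤ Real.log x := by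
  have h := Real.log_le_sub_one_of_pos (inv_pos.2 hx)
  rw [Real.log_inv] at h
  have h2 : x⁻¹ = 1/x := (one_div x).symm
  linarith [h2 ▸ h]

lemma sum_log (m : ℕ) : ∀ n : ℕ, m ≤ n →
    (∑ i ∈ Finset.range (m+1), (1:ℝ)/(i+1)) + (Real.log (n+2) - Real.log (m+2))
      ≤ ∑ i ∈ Finset.range (n+1), (1:ℝ)/(i+1) := by
  intro n
  induction n with
  | zero => intro h; interval_cases m; simp
  | succ n ih =>
    intro hmn
    rcases Nat.lt_or_ge m (n+1) with hlt | hge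
    · have h1 := ih (by omega)
      have hpos : (0:ℝ) < ((n:ℝ)+3)/((n:ℝ)+2) := by positivity
      have h2 := Real.log_le_sub_one_of_pos hpos
      rw [Real.log_div (by positivity) (by positivity)] at h2
      have hne : ((n:ℝ)+2) ≠ 0 := by positivity
      have h3 : ((n:ℝ)+3)/((n:ℝ)+2) - 1 = 1/((n:ℝ)+2) := by
        rw [div_sub_one hne]; congr 1; ring
      have h4 : ∑ i ∈ Finset.range (n+1+1), (1:ℝ)/(i+1)
          = (∑ i ∈ Finset.range (n+1), (1:ℝ)/(i+1)) + 1/((n:ℝ)+2) := by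
        rw [Finset.sum_range_succ]; push_cast; ring
      have h5 : Real.log (((n:ℕ)+1:ℕ) + 2 : ℝ) = Real.log ((n:ℝ)+3) := by
        norm_cast
      push_cast
      rw [show ((n:ℝ)+1+2) = (n:ℝ)+3 by ring]
      linarith [h4]
    · have hme : m = n+1 := by omega
      subst hme; simp

lemma logdiff (a b : ℝ) (m : ℕ) (ha : 0 < a) (hb : 0 < b) :
    Real.log b + m * Real.log 2 + (1 - b * 2^m / a) ≤ Real.log a := by
  have h2m : (0:ℝ) < b * 2^m := by positivity
  have hx : (0:ℝ) < a / (b*2^m) := by positivity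
  have h1 : Real.log a = Real.log (b*2^m) + Real.log (a/(b*2^m)) := by
    rw [← Real.log_mul (ne_of_gt h2m) (ne_of_gt hx)]
    congr 1
    field_simp
  have h2 : Real.log (b*2^m) = Real.log b + m * Real.log 2 := by
    rw [Real.log_mul hb.ne' (by positivity), Real.log_pow]
  have h3 := log_lb _ hx
  have h4 : 1/(a/(b*2^m)) = b*2^m/a := one_div_div _ _
  linarith [h4 ▸ h3]


lemma p_bounds (p : ℝ) (hp : p = 1 - Real.exp (-(3 / 4))) :
    0.527633 < p ∧ p < 0.527634 := by
  have h4 : Real.exp (3/4) ^ 4 = Real.exp 1 ^ 3 := by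
    rw [← Real.exp_nat_mul, ← Real.exp_nat_mul]; norm_num
  have hlo := Real.exp_one_gt_d9
  have hhi := Real.exp_one_lt_d9
  have hpos : (0:ℝ) < Real.exp (3/4) := Real.exp_pos _
  have he1pos : (0:ℝ) < Real.exp 1 := Real.exp_pos _
  have hub : Real.exp (3/4) < 1/0.472366 := by
    have h1 : Real.exp 1 ^ 3 < (2.7182818286:ℝ)^3 := by
      apply pow_lt_pow_left₀ hhi he1pos.le
      norm_num
    have h2 : Real.exp (3/4) ^ 4 < (1/0.472366:ℝ)^4 := by
      rw [h4]; calc Real.exp 1 ^3 < (2.7182818286:ℝ)^3 := h1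
        _ < (1/0.472366:ℝ)^4 := by norm_num
    exact lt_of_pow_lt_pow_left₀ 4 (by norm_num) h2
  have hlb : (1/0.472367:ℝ) < Real.exp (3/4) := by
    have h2 : ((1/0.472367:ℝ))^4 < Real.exp (3/4) ^ 4 := by
      rw [h4]
      calc ((1/0.472367:ℝ))^4 < (2.7182818283:ℝ)^3 := by norm_num
        _ < Real.exp 1 ^ 3 := by
            apply pow_lt_pow_left₀ hlo (by norm_num)
            norm_num
    exact lt_of_pow_lt_pow_left₀ 4 hpos.le h2
  have hexp : Real.exp (-(3/4)) = (Real.exp (3/4))⁻¹ := by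
    rw [← Real.exp_neg]
  constructor
  · rw [hp, hexp]
    have : (Real.exp (3/4))⁻¹ < (1/0.472367:ℝ)⁻¹ := by
      apply inv_strictAnti₀ (by norm_num) hlb
    have h472 : ((1/0.472367:ℝ))⁻¹ = 0.472367 := by norm_num
    nlinarith
  · rw [hp, hexp]
    have : ((1/0.472366:ℝ))⁻¹ < (Real.exp (3/4))⁻¹ := by
      apply inv_strictAnti₀ hpos hub
    have h472 : ((1/0.472366:ℝ))⁻¹ = 0.472366 := by norm_num
    nlinarith


lemma h_ub (p : ℝ) (hp1 : 0.527633 < p) (hp2 : p < 0.527634) (k : ℤ) (hk : 0 ≤ k) :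
    (k : ℝ) * p / (3 * p - 1) - 4 * p * (1 - 2 * p) / (3 * p - 1) ^ 2
      + ((1 - p) / (3 * p - 1)) ^ 2 * (2 * (1 - p) / (1 + p)) ^ k
    ≤ 0.905196 * (k:ℝ) + 0.3434 + 0.65672 * (0.61844:ℝ) ^ k := by
  obtain ⟨m, rfl⟩ := Int.eq_ofNat_of_zero_le hk
  have hd : (0:ℝ) < 3 * p - 1 := by linarith
  have hd2 : (0:ℝ) < (3 * p - 1)^2 := by positivity
  have h1p : (0:ℝ) < 1 + p := by linarith
  -- term 1
  have t1 : ((m:ℕ):ℝ) * p / (3 * p - 1) ≤ 0.905196 * (m:ℝ) := by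
    rw [mul_div_assoc]
    rw [show (0.905196:ℝ) * (m:ℝ) = (m:ℝ) * 0.905196 by ring]
    apply mul_le_mul_of_nonneg_left _ (by positivity)
    rw [div_le_iff₀ hd]; linarith
  -- term 2
  have t2 : -(4 * p * (1 - 2 * p) / (3 * p - 1) ^ 2) ≤ 0.3434 := by
    rw [neg_div' ]
    rw [div_le_iff₀ hd2]
    nlinarith [mul_nonneg (sub_nonneg.2 hp1.le) (sub_nonneg.2 hp2.le)]
  -- term 3
  have t3 : ((1 - p) / (3 * p - 1)) ^ 2 ≤ 0.65672 := by
    have hb : (1 - p) / (3 * p - 1) ≤ 0.81038 := by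
      rw [div_le_iff₀ hd]; linarith
    have hb0 : (0:ℝ) ≤ (1 - p) / (3 * p - 1) := by
      apply div_nonneg (by linarith) hd.le
    calc ((1 - p) / (3 * p - 1)) ^ 2 ≤ (0.81038:ℝ)^2 := by
          apply pow_le_pow_left₀ hb0 hb
      _ ≤ 0.65672 := by norm_num
  have t4 : (0:ℝ) ≤ 2 * (1 - p) / (1 + p) := by
    apply div_nonneg (by linarith) h1p.le
  have t5 : 2 * (1 - p) / (1 + p) ≤ 0.61844 := by
    rw [div_le_iff₀ h1p]; linarith
  have t6 : (2 * (1 - p) / (1 + p)) ^ ((m:ℕ):ℤ) ≤ (0.61844:ℝ) ^ ((m:ℕ):ℤ) := by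
    rw [zpow_natCast, zpow_natCast]
    exact pow_le_pow_left₀ t4 t5 m
  have t7 : ((1 - p) / (3 * p - 1)) ^ 2 * (2 * (1 - p) / (1 + p)) ^ ((m:ℕ):ℤ)
      ≤ 0.65672 * (0.61844:ℝ) ^ ((m:ℕ):ℤ) := by
    apply mul_le_mul t3 t6 _ (by norm_num)
    rw [zpow_natCast]; positivity
  push_cast at t1 ⊢
  linarith

lemma h_ub_neg (p : ℝ) (hp1 : 0.527633 < p) (hp2 : p < 0.527634) :
    ((-1:ℤ) : ℝ) * p / (3 * p - 1) - 4 * p * (1 - 2 * p) / (3 * p - 1) ^ 2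
      + ((1 - p) / (3 * p - 1)) ^ 2 * (2 * (1 - p) / (1 + p)) ^ (-1:ℤ)
    ≤ 0.500139 := by
  have hd : (0:ℝ) < 3 * p - 1 := by linarith
  have hd2 : (0:ℝ) < (3 * p - 1)^2 := by positivity
  have h1p : (0:ℝ) < 1 + p := by linarith
  have h1mp : (0:ℝ) < 1 - p := by linarith
  have hr : (0:ℝ) < 2 * (1 - p) / (1 + p) := by positivity
  have t1 : ((-1:ℤ):ℝ) * p / (3 * p - 1) ≤ -0.905184 := by
    push_cast
    rw [div_le_iff₀ hd]; nlinarith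
  have t2 : -(4 * p * (1 - 2 * p) / (3 * p - 1) ^ 2) ≤ 0.3434 := by
    rw [neg_div']
    rw [div_le_iff₀ hd2]
    nlinarith [mul_nonneg (sub_nonneg.2 hp1.le) (sub_nonneg.2 hp2.le)]
  have t3 : ((1 - p) / (3 * p - 1)) ^ 2 ≤ 0.65672 := by
    have hb : (1 - p) / (3 * p - 1) ≤ 0.81038 := by
      rw [div_le_iff₀ hd]; linarith
    have hb0 : (0:ℝ) ≤ (1 - p) / (3 * p - 1) := by
      apply div_nonneg (by linarith) hd.le
    calc ((1 - p) / (3 * p - 1)) ^ 2 ≤ (0.81038:ℝ)^2 := pow_le_pow_left₀ hb0 hb 2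
      _ ≤ 0.65672 := by norm_num
  have t4 : (2 * (1 - p) / (1 + p)) ^ (-1:ℤ) ≤ 1.61701 := by
    rw [zpow_neg_one]
    rw [inv_eq_one_div, div_le_iff₀ hr]
    rw [show (1.61701:ℝ) * (2*(1-p)/(1+p)) = (1.61701 * (2*(1-p)))/(1+p) by ring]
    rw [le_div_iff₀ h1p]
    nlinarith
  have t40 : (0:ℝ) ≤ (2 * (1 - p) / (1 + p)) ^ (-1:ℤ) := by positivity
  have t5 : ((1 - p) / (3 * p - 1)) ^ 2 * (2 * (1 - p) / (1 + p)) ^ (-1:ℤ)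
      ≤ 0.65672 * 1.61701 := by
    apply mul_le_mul t3 t4 t40 (by norm_num)
  linarith

lemma k_eq_of (n : ℕ) (k : ℤ) (M : ℕ) (hn : 0 < n)
    (hk : k = ⌈Real.logb 2 ((n:ℝ) / (3/4))⌉ - 2)
    (h1 : (2:ℝ)^M * 3 < 4 * n) (h2 : (4:ℝ) * n ≤ 2^(M+1) * 3) :
    k = (M:ℤ) - 1 := by
  have hn0 : (0:ℝ) < (n:ℝ) := by exact_mod_cast hn
  have hx : (0:ℝ) < (n:ℝ)/(3/4) := by positivity
  have hxe : (n:ℝ)/(3/4) = 4 * n / 3 := by ring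
  have hceil : ⌈Real.logb 2 ((n:ℝ)/(3/4))⌉ = (M:ℤ) + 1 := by
    rw [Int.ceil_eq_iff]
    constructor
    · rw [show (((M:ℤ) + 1 : ℤ):ℝ) - 1 = ((M:ℕ):ℝ) by push_cast; ring]
      rw [Real.lt_logb_iff_rpow_lt one_lt_two hx, Real.rpow_natCast]
      rw [hxe, lt_div_iff₀ (by norm_num : (0:ℝ) < 3)]
      linarith
    · rw [show (((M:ℤ) + 1 : ℤ):ℝ) = ((M+1:ℕ):ℝ) by push_cast; ring]
      rw [Real.logb_le_iff_le_rpow one_lt_two hx, Real.rpow_natCast]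
      rw [hxe, div_le_iff₀ (by norm_num : (0:ℝ) < 3)]
      linarith
  omega

lemma log51_ub : Real.log 51 ≤ 6 * Real.log 2 - 0.2252 := by
  have h1 : Real.log 64 = 6 * Real.log 2 := by
    rw [show (64:ℝ) = 2^(6:ℕ) by norm_num, Real.log_pow]; norm_num
  have h2 : (0.2252:ℝ) ≤ Real.log (64/51) := by
    rw [Real.le_log_iff_exp_le (by norm_num : (0:ℝ) < 64/51)]
    have e1 : Real.exp 0.2252 = Real.exp 0.014075 ^ (16:ℕ) := by
      rw [← Real.exp_nat_mul]; norm_num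
    have e2 : Real.exp 0.014075 ≤ 1/(1 - 0.014075) := by
      have h := Real.add_one_le_exp (-0.014075:ℝ)
      rw [Real.exp_neg] at h
      have hpos := Real.exp_pos (0.014075:ℝ)
      rw [le_inv_comm₀ (by norm_num) hpos] at h
      · calc Real.exp 0.014075 ≤ ((-0.014075:ℝ) + 1)⁻¹ := h
          _ = 1/(1-0.014075) := by norm_num
    calc Real.exp 0.2252 = Real.exp 0.014075 ^ (16:ℕ) := e1
      _ ≤ (1/(1 - 0.014075:ℝ))^(16:ℕ) := by
          apply pow_le_pow_left₀ (Real.exp_pos _).le e2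
      _ ≤ 64/51 := by norm_num
  have h3 : Real.log (64/51) = Real.log 64 - Real.log 51 :=
    Real.log_div (by norm_num) (by norm_num)
  linarith

lemma log43_ub : Real.log (4/3) ≤ 1/3 := by
  rw [Real.log_le_iff_le_exp (by norm_num : (0:ℝ) < 4/3)]
  have := Real.add_one_le_exp (1/3:ℝ)
  linarith

end Helpers

/-- With `c = 3/4`, `p = 1 - e^{-3/4}`, `k = ⌈log₂(n/c)⌉ - 2` (an integer)
and `h = kp/(3p-1) - 4p(1-2p)/(3p-1)² + ((1-p)/(3p-1))² (2(1-p)/(1+p))^k`,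
we have `(3hc - c)/(H_{n+1} - 1) ≤ 2.965` for all `n ≥ 1`. -/
theorem uniform_ratio_le (n : ℕ) (hn : 1 ≤ n)
    (c p h : ℝ) (k : ℤ)
    (hc : c = 3 / 4) (hp : p = 1 - Real.exp (-(3 / 4)))
    (hk : k = ⌈Real.logb 2 (n / c)⌉ - 2)
    (hh : h = (k : ℝ) * p / (3 * p - 1) - 4 * p * (1 - 2 * p) / (3 * p - 1) ^ 2
        + ((1 - p) / (3 * p - 1)) ^ 2 * (2 * (1 - p) / (1 + p)) ^ k) :
    (3 * h * c - c) / ((∑ i ∈ Finset.range (n + 1), (1 : ℝ) / (i + 1)) - 1) ≤ 2.965 := by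
  subst hc
  obtain ⟨hp1, hp2⟩ := p_bounds p hp
  have hn0 : 0 < n := hn
  rcases le_or_gt n 1 with hA | hlo0
  · -- K = -1, n = 1
    have hn1 : n = 1 := by omega
    subst hn1
    have hkK : k = -1 := by
      have hke := k_eq_of 1 k 0 (by norm_num) hk (by norm_num) (by norm_num)
      omega
    rw [hkK] at hh
    have hub := h_ub_neg p hp1 hp2
    rw [← hh] at hub
    have hval : ∑ i ∈ Finset.range (1 + 1), (1:ℝ)/(i+1) = 3/2 := by
      norm_num [Finset.sum_range_succ]
    rw [hval]
    rw [div_le_iff₀ (by norm_num : (0:ℝ) < 3/2 - 1)]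
    linarith
  rcases le_or_gt n 3 with hB0 | hlo0
  · -- K = 0, n ∈ [2, 3]
    have hnlo : (2:ℝ) ≤ (n:ℝ) := by exact_mod_cast (by omega : 2 ≤ n)
    have hnhi : ((n:ℝ)) ≤ 3 := by exact_mod_cast hB0
    have hkK : k = 0 := by
      have hke := k_eq_of n k 1 hn0 hk (by norm_num; linarith) (by norm_num; linarith)
      omega
    rw [hkK] at hh
    have hub := h_ub p hp1 hp2 0 (by norm_num)
    rw [← hh] at hub
    norm_num at hub
    have hmono := sum_mono (2+1) (n+1) (by omega)
    have hval : ∑ i ∈ Finset.range (2+1), (1:ℝ)/(i+1) = 11/6 := by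
      norm_num [Finset.sum_range_succ]
    rw [hval] at hmono
    rw [div_le_iff₀ (by linarith : (0:ℝ) < (∑ i ∈ Finset.range (n + 1), (1 : ℝ) / (i + 1)) - 1)]
    linarith
  rcases le_or_gt n 6 with hB1 | hlo1
  · -- K = 1, n ∈ [4, 6]
    have hnlo : (4:ℝ) ≤ (n:ℝ) := by exact_mod_cast (by omega : 4 ≤ n)
    have hnhi : ((n:ℝ)) ≤ 6 := by exact_mod_cast hB1
    have hkK : k = 1 := by
      have hke := k_eq_of n k 2 hn0 hk (by norm_num; linarith) (by norm_num; linarith)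
      omega
    rw [hkK] at hh
    have hub := h_ub p hp1 hp2 1 (by norm_num)
    rw [← hh] at hub
    norm_num at hub
    have hmono := sum_mono (4+1) (n+1) (by omega)
    have hval : ∑ i ∈ Finset.range (4+1), (1:ℝ)/(i+1) = 137/60 := by
      norm_num [Finset.sum_range_succ]
    rw [hval] at hmono
    rw [div_le_iff₀ (by linarith : (0:ℝ) < (∑ i ∈ Finset.range (n + 1), (1 : ℝ) / (i + 1)) - 1)]
    linarith
  rcases le_or_gt n 12 with hB2 | hlo2
  · -- K = 2, n ∈ [7, 12]
    have hnlo : (7:ℝ) ≤ (n:ℝ) := by exact_mod_cast (by omega : 7 ≤ n)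
    have hnhi : ((n:ℝ)) ≤ 12 := by exact_mod_cast hB2
    have hkK : k = 2 := by
      have hke := k_eq_of n k 3 hn0 hk (by norm_num; linarith) (by norm_num; linarith)
      omega
    rw [hkK] at hh
    have hub := h_ub p hp1 hp2 2 (by norm_num)
    rw [← hh] at hub
    norm_num at hub
    have hmono := sum_mono (7+1) (n+1) (by omega)
    have hval : ∑ i ∈ Finset.range (7+1), (1:ℝ)/(i+1) = 761/280 := by
      norm_num [Finset.sum_range_succ]
    rw [hval] at hmono
    rw [div_le_iff₀ (by linarith : (0:ℝ) < (∑ i ∈ Finset.range (n + 1), (1 : ℝ) / (i + 1)) - 1)]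
    linarith
  rcases le_or_gt n 24 with hB3 | hlo3
  · -- K = 3, n ∈ [13, 24]
    have hnlo : (13:ℝ) ≤ (n:ℝ) := by exact_mod_cast (by omega : 13 ≤ n)
    have hnhi : ((n:ℝ)) ≤ 24 := by exact_mod_cast hB3
    have hkK : k = 3 := by
      have hke := k_eq_of n k 4 hn0 hk (by norm_num; linarith) (by norm_num; linarith)
      omega
    rw [hkK] at hh
    have hub := h_ub p hp1 hp2 3 (by norm_num)
    rw [← hh] at hub
    norm_num at hub
    have hmono := sum_mono (13+1) (n+1) (by omega)
    have hval : ∑ i ∈ Finset.range (13+1), (1:ℝ)/(i+1) = 1171733/360360 := by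
      norm_num [Finset.sum_range_succ]
    rw [hval] at hmono
    rw [div_le_iff₀ (by linarith : (0:ℝ) < (∑ i ∈ Finset.range (n + 1), (1 : ℝ) / (i + 1)) - 1)]
    linarith
  rcases le_or_gt n 48 with hB4 | hlo4
  · -- K = 4, n ∈ [25, 48]
    have hnlo : (25:ℝ) ≤ (n:ℝ) := by exact_mod_cast (by omega : 25 ≤ n)
    have hnhi : ((n:ℝ)) ≤ 48 := by exact_mod_cast hB4
    have hkK : k = 4 := by
      have hke := k_eq_of n k 5 hn0 hk (by norm_num; linarith) (by norm_num; linarith)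
      omega
    rw [hkK] at hh
    have hub := h_ub p hp1 hp2 4 (by norm_num)
    rw [← hh] at hub
    norm_num at hub
    have hmono := sum_mono (25+1) (n+1) (by omega)
    have hval : ∑ i ∈ Finset.range (25+1), (1:ℝ)/(i+1) = 34395742267/8923714800 := by
      norm_num [Finset.sum_range_succ]
    rw [hval] at hmono
    rw [div_le_iff₀ (by linarith : (0:ℝ) < (∑ i ∈ Finset.range (n + 1), (1 : ℝ) / (i + 1)) - 1)]
    linarith
  rcases le_or_gt n 96 with hB5 | hlo5
  · -- K = 5, n ∈ [49, 96]
    have hnlo : (49:ℝ) ≤ (n:ℝ) := by exact_mod_cast (by omega : 49 ≤ n)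
    have hnhi : ((n:ℝ)) ≤ 96 := by exact_mod_cast hB5
    have hkK : k = 5 := by
      have hke := k_eq_of n k 6 hn0 hk (by norm_num; linarith) (by norm_num; linarith)
      omega
    rw [hkK] at hh
    have hub := h_ub p hp1 hp2 5 (by norm_num)
    rw [← hh] at hub
    norm_num at hub
    have hmono := sum_mono (49+1) (n+1) (by omega)
    have hval : ∑ i ∈ Finset.range (49+1), (1:ℝ)/(i+1) = 13943237577224054960759/3099044504245996706400 := by
      norm_num [Finset.sum_range_succ]
    rw [hval] at hmono
    rw [div_le_iff₀ (by linarith : (0:ℝ) < (∑ i ∈ Finset.range (n + 1), (1 : ℝ) / (i + 1)) - 1)]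
    linarith
  rcases le_or_gt n 192 with hB6 | hlo6
  · -- K = 6, n ∈ [97, 192]
    have hnlo : (97:ℝ) ≤ (n:ℝ) := by exact_mod_cast (by omega : 97 ≤ n)
    have hnhi : ((n:ℝ)) ≤ 192 := by exact_mod_cast hB6
    have hkK : k = 6 := by
      have hke := k_eq_of n k 7 hn0 hk (by norm_num; linarith) (by norm_num; linarith)
      omega
    rw [hkK] at hh
    have hub := h_ub p hp1 hp2 6 (by norm_num)
    rw [← hh] at hub
    norm_num at hub
    have hanch := sum_log 49 n (by omega)
    rw [show (49:ℕ)+1 = 50 from rfl, S50_val,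
      show ((49:ℕ):ℝ) + 2 = 51 by norm_num] at hanch
    have hlm : Real.log 99 ≤ Real.log ((n:ℝ)+2) :=
      (Real.log_le_log_iff (by norm_num) (by positivity)).2 (by linarith)
    have hld := logdiff (99:ℝ) 51 1 (by norm_num) (by norm_num)
    norm_num at hld
    have l2 := Real.log_two_gt_d9
    rw [div_le_iff₀ (by linarith : (0:ℝ) < (∑ i ∈ Finset.range (n + 1), (1 : ℝ) / (i + 1)) - 1)]
    linarith
  rcases le_or_gt n 384 with hB7 | hlo7
  · -- K = 7, n ∈ [193, 384]
    have hnlo : (193:ℝ) ≤ (n:ℝ) := by exact_mod_cast (by omega : 193 ≤ n)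
    have hnhi : ((n:ℝ)) ≤ 384 := by exact_mod_cast hB7
    have hkK : k = 7 := by
      have hke := k_eq_of n k 8 hn0 hk (by norm_num; linarith) (by norm_num; linarith)
      omega
    rw [hkK] at hh
    have hub := h_ub p hp1 hp2 7 (by norm_num)
    rw [← hh] at hub
    norm_num at hub
    have hanch := sum_log 49 n (by omega)
    rw [show (49:ℕ)+1 = 50 from rfl, S50_val,
      show ((49:ℕ):ℝ) + 2 = 51 by norm_num] at hanch
    have hlm : Real.log 195 ≤ Real.log ((n:ℝ)+2) :=
      (Real.log_le_log_iff (by norm_num) (by positivity)).2 (by linarith)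
    have hld := logdiff (195:ℝ) 51 2 (by norm_num) (by norm_num)
    norm_num at hld
    have l2 := Real.log_two_gt_d9
    rw [div_le_iff₀ (by linarith : (0:ℝ) < (∑ i ∈ Finset.range (n + 1), (1 : ℝ) / (i + 1)) - 1)]
    linarith
  rcases le_or_gt n 768 with hB8 | hlo8
  · -- K = 8, n ∈ [385, 768]
    have hnlo : (385:ℝ) ≤ (n:ℝ) := by exact_mod_cast (by omega : 385 ≤ n)
    have hnhi : ((n:ℝ)) ≤ 768 := by exact_mod_cast hB8
    have hkK : k = 8 := by
      have hke := k_eq_of n k 9 hn0 hk (by norm_num; linarith) (by norm_num; linarith)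
      omega
    rw [hkK] at hh
    have hub := h_ub p hp1 hp2 8 (by norm_num)
    rw [← hh] at hub
    norm_num at hub
    have hanch := sum_log 49 n (by omega)
    rw [show (49:ℕ)+1 = 50 from rfl, S50_val,
      show ((49:ℕ):ℝ) + 2 = 51 by norm_num] at hanch
    have hlm : Real.log 387 ≤ Real.log ((n:ℝ)+2) :=
      (Real.log_le_log_iff (by norm_num) (by positivity)).2 (by linarith)
    have hld := logdiff (387:ℝ) 51 3 (by norm_num) (by norm_num)
    norm_num at hld
    have l2 := Real.log_two_gt_d9
    rw [div_le_iff₀ (by linarith : (0:ℝ) < (∑ i ∈ Finset.range (n + 1), (1 : ℝ) / (i + 1)) - 1)]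
    linarith
  rcases le_or_gt n 1536 with hB9 | hlo9
  · -- K = 9, n ∈ [769, 1536]
    have hnlo : (769:ℝ) ≤ (n:ℝ) := by exact_mod_cast (by omega : 769 ≤ n)
    have hnhi : ((n:ℝ)) ≤ 1536 := by exact_mod_cast hB9
    have hkK : k = 9 := by
      have hke := k_eq_of n k 10 hn0 hk (by norm_num; linarith) (by norm_num; linarith)
      omega
    rw [hkK] at hh
    have hub := h_ub p hp1 hp2 9 (by norm_num)
    rw [← hh] at hub
    norm_num at hub
    have hanch := sum_log 49 n (by omega)
    rw [show (49:ℕ)+1 = 50 from rfl, S50_val,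
      show ((49:ℕ):ℝ) + 2 = 51 by norm_num] at hanch
    have hlm : Real.log 771 ≤ Real.log ((n:ℝ)+2) :=
      (Real.log_le_log_iff (by norm_num) (by positivity)).2 (by linarith)
    have hld := logdiff (771:ℝ) 51 4 (by norm_num) (by norm_num)
    norm_num at hld
    have l2 := Real.log_two_gt_d9
    rw [div_le_iff₀ (by linarith : (0:ℝ) < (∑ i ∈ Finset.range (n + 1), (1 : ℝ) / (i + 1)) - 1)]
    linarith
  rcases le_or_gt n 3072 with hB10 | hlo10
  · -- K = 10, n ∈ [1537, 3072]
    have hnlo : (1537:ℝ) ≤ (n:ℝ) := by exact_mod_cast (by omega : 1537 ≤ n)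
    have hnhi : ((n:ℝ)) ≤ 3072 := by exact_mod_cast hB10
    have hkK : k = 10 := by
      have hke := k_eq_of n k 11 hn0 hk (by norm_num; linarith) (by norm_num; linarith)
      omega
    rw [hkK] at hh
    have hub := h_ub p hp1 hp2 10 (by norm_num)
    rw [← hh] at hub
    norm_num at hub
    have hanch := sum_log 49 n (by omega)
    rw [show (49:ℕ)+1 = 50 from rfl, S50_val,
      show ((49:ℕ):ℝ) + 2 = 51 by norm_num] at hanch
    have hlm : Real.log 1539 ≤ Real.log ((n:ℝ)+2) :=
      (Real.log_le_log_iff (by norm_num) (by positivity)).2 (by linarith)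
    have hld := logdiff (1539:ℝ) 51 5 (by norm_num) (by norm_num)
    norm_num at hld
    have l2 := Real.log_two_gt_d9
    rw [div_le_iff₀ (by linarith : (0:ℝ) < (∑ i ∈ Finset.range (n + 1), (1 : ℝ) / (i + 1)) - 1)]
    linarith
  rcases le_or_gt n 6144 with hB11 | hlo11
  · -- K = 11, n ∈ [3073, 6144]
    have hnlo : (3073:ℝ) ≤ (n:ℝ) := by exact_mod_cast (by omega : 3073 ≤ n)
    have hnhi : ((n:ℝ)) ≤ 6144 := by exact_mod_cast hB11
    have hkK : k = 11 := by
      have hke := k_eq_of n k 12 hn0 hk (by norm_num; linarith) (by norm_num; linarith)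
      omega
    rw [hkK] at hh
    have hub := h_ub p hp1 hp2 11 (by norm_num)
    rw [← hh] at hub
    norm_num at hub
    have hanch := sum_log 49 n (by omega)
    rw [show (49:ℕ)+1 = 50 from rfl, S50_val,
      show ((49:ℕ):ℝ) + 2 = 51 by norm_num] at hanch
    have hlm : Real.log 3075 ≤ Real.log ((n:ℝ)+2) :=
      (Real.log_le_log_iff (by norm_num) (by positivity)).2 (by linarith)
    have hld := logdiff (3075:ℝ) 51 6 (by norm_num) (by norm_num)
    norm_num at hld
    have l2 := Real.log_two_gt_d9
    rw [div_le_iff₀ (by linarith : (0:ℝ) < (∑ i ∈ Finset.range (n + 1), (1 : ℝ) / (i + 1)) - 1)]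
    linarith
  rcases le_or_gt n 12288 with hB12 | hlo12
  · -- K = 12, n ∈ [6145, 12288]
    have hnlo : (6145:ℝ) ≤ (n:ℝ) := by exact_mod_cast (by omega : 6145 ≤ n)
    have hnhi : ((n:ℝ)) ≤ 12288 := by exact_mod_cast hB12
    have hkK : k = 12 := by
      have hke := k_eq_of n k 13 hn0 hk (by norm_num; linarith) (by norm_num; linarith)
      omega
    rw [hkK] at hh
    have hub := h_ub p hp1 hp2 12 (by norm_num)
    rw [← hh] at hub
    norm_num at hub
    have hanch := sum_log 49 n (by omega)
    rw [show (49:ℕ)+1 = 50 from rfl, S50_val,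
      show ((49:ℕ):ℝ) + 2 = 51 by norm_num] at hanch
    have hlm : Real.log 6147 ≤ Real.log ((n:ℝ)+2) :=
      (Real.log_le_log_iff (by norm_num) (by positivity)).2 (by linarith)
    have hld := logdiff (6147:ℝ) 51 7 (by norm_num) (by norm_num)
    norm_num at hld
    have l2 := Real.log_two_gt_d9
    rw [div_le_iff₀ (by linarith : (0:ℝ) < (∑ i ∈ Finset.range (n + 1), (1 : ℝ) / (i + 1)) - 1)]
    linarith
  rcases le_or_gt n 24576 with hB13 | hlo13
  · -- K = 13, n ∈ [12289, 24576]
    have hnlo : (12289:ℝ) ≤ (n:ℝ) := by exact_mod_cast (by omega : 12289 ≤ n)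
    have hnhi : ((n:ℝ)) ≤ 24576 := by exact_mod_cast hB13
    have hkK : k = 13 := by
      have hke := k_eq_of n k 14 hn0 hk (by norm_num; linarith) (by norm_num; linarith)
      omega
    rw [hkK] at hh
    have hub := h_ub p hp1 hp2 13 (by norm_num)
    rw [← hh] at hub
    norm_num at hub
    have hanch := sum_log 49 n (by omega)
    rw [show (49:ℕ)+1 = 50 from rfl, S50_val,
      show ((49:ℕ):ℝ) + 2 = 51 by norm_num] at hanch
    have hlm : Real.log 12291 ≤ Real.log ((n:ℝ)+2) :=
      (Real.log_le_log_iff (by norm_num) (by positivity)).2 (by linarith)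
    have hld := logdiff (12291:ℝ) 51 8 (by norm_num) (by norm_num)
    norm_num at hld
    have l2 := Real.log_two_gt_d9
    rw [div_le_iff₀ (by linarith : (0:ℝ) < (∑ i ∈ Finset.range (n + 1), (1 : ℝ) / (i + 1)) - 1)]
    linarith
  rcases le_or_gt n 49152 with hB14 | hlo14
  · -- K = 14, n ∈ [24577, 49152]
    have hnlo : (24577:ℝ) ≤ (n:ℝ) := by exact_mod_cast (by omega : 24577 ≤ n)
    have hnhi : ((n:ℝ)) ≤ 49152 := by exact_mod_cast hB14
    have hkK : k = 14 := by
      have hke := k_eq_of n k 15 hn0 hk (by norm_num; linarith) (by norm_num; linarith)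
      omega
    rw [hkK] at hh
    have hub := h_ub p hp1 hp2 14 (by norm_num)
    rw [← hh] at hub
    norm_num at hub
    have hanch := sum_log 49 n (by omega)
    rw [show (49:ℕ)+1 = 50 from rfl, S50_val,
      show ((49:ℕ):ℝ) + 2 = 51 by norm_num] at hanch
    have hlm : Real.log 24579 ≤ Real.log ((n:ℝ)+2) :=
      (Real.log_le_log_iff (by norm_num) (by positivity)).2 (by linarith)
    have hld := logdiff (24579:ℝ) 51 9 (by norm_num) (by norm_num)
    norm_num at hld
    have l2 := Real.log_two_gt_d9
    rw [div_le_iff₀ (by linarith : (0:ℝ) < (∑ i ∈ Finset.range (n + 1), (1 : ℝ) / (i + 1)) - 1)]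
    linarith
  -- tail : n ≥ 49153
  have hnlo : (49153:ℝ) ≤ (n:ℝ) := by exact_mod_cast (by omega : 49153 ≤ n)
  have hnpos : (0:ℝ) < (n:ℝ) := by linarith
  have hx : (0:ℝ) < (n:ℝ)/(3/4) := by positivity
  have hxe : (n:ℝ)/(3/4) = 4 * n / 3 := by ring
  -- k ≥ 15
  have hk15 : (15:ℤ) ≤ k := by
    have h16 : (16:ℝ) < Real.logb 2 ((n:ℝ)/(3/4)) := by
      rw [show (16:ℝ) = ((16:ℕ):ℝ) by norm_num]
      rw [Real.lt_logb_iff_rpow_lt one_lt_two hx, Real.rpow_natCast]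
      rw [hxe, lt_div_iff₀ (by norm_num : (0:ℝ) < 3)]
      norm_num
      linarith
    have := Int.lt_ceil.2 h16
    norm_num at this
    omega
  have hk0 : (0:ℝ) ≤ (k:ℝ) := by exact_mod_cast (by omega : (0:ℤ) ≤ k)
  -- upper bound on k
  have hkub : (k:ℝ) * Real.log 2 ≤ 1/3 + Real.log n - Real.log 2 := by
    have hcl := Int.ceil_lt_add_one (Real.logb 2 ((n:ℝ)/(3/4)))
    have hkr : (k:ℝ) < Real.logb 2 ((n:ℝ)/(3/4)) - 1 := by
      rw [hk]
      push_cast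
      linarith
    have hlogb : Real.logb 2 ((n:ℝ)/(3/4)) = (Real.log (4/3) + Real.log n) / Real.log 2 := by
      rw [Real.logb, hxe]
      rw [show (4:ℝ) * n / 3 = (4/3) * n by ring]
      rw [Real.log_mul (by norm_num) (by positivity)]
    rw [hlogb] at hkr
    have hl2 : (0:ℝ) < Real.log 2 := Real.log_pos (by norm_num)
    have h43 := log43_ub
    have hdd : ((Real.log (4/3) + Real.log n) / Real.log 2) * Real.log 2
        = Real.log (4/3) + Real.log n := div_mul_cancel₀ _ hl2.ne'
    have hmul := mul_le_mul_of_nonneg_right hkr.le hl2.le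
    rw [sub_mul, one_mul, hdd] at hmul
    linarith
  -- h upper bound
  have hub := h_ub p hp1 hp2 k (by omega)
  rw [← hh] at hub
  have hr15 : (0.61844:ℝ) ^ k ≤ 0.000741 := by
    calc (0.61844:ℝ) ^ k ≤ (0.61844:ℝ) ^ (15:ℤ) :=
          zpow_le_zpow_right_of_le_one₀ (by norm_num) (by norm_num) hk15
      _ ≤ 0.000741 := by norm_num
  have hub2 : h ≤ 0.905196 * (k:ℝ) + 0.3434 + 0.65672 * 0.000741 := by
    nlinarith [hub, hr15]
  -- denominator lower bound
  have hanch := sum_log 49 n (by omega)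
  rw [show (49:ℕ)+1 = 50 from rfl, S50_val,
    show ((49:ℕ):ℝ) + 2 = 51 by norm_num] at hanch
  have hlm : Real.log ((n:ℝ)) ≤ Real.log ((n:ℝ)+2) :=
    (Real.log_le_log_iff (by positivity) (by positivity)).2 (by linarith)
  have hX : 15 * Real.log 2 ≤ Real.log n := by
    have h1 : Real.log (2^(15:ℕ)) ≤ Real.log n :=
      (Real.log_le_log_iff (by positivity) (by positivity)).2 (by norm_num; linarith)
    rw [Real.log_pow] at h1
    push_cast at h1
    linarith
  have h51 := log51_ub
  have l2a := Real.log_two_gt_d9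
  have l2b := Real.log_two_lt_d9
  have hkl2 : (k:ℝ) * 0.6931471803 ≤ (k:ℝ) * Real.log 2 :=
    mul_le_mul_of_nonneg_left l2a.le hk0
  have hk15R : (15:ℝ) ≤ (k:ℝ) := by exact_mod_cast hk15
  rw [div_le_iff₀ (by nlinarith : (0:ℝ) < (∑ i ∈ Finset.range (n + 1), (1 : ℝ) / (i + 1)) - 1)]
  nlinarith [hub2, hanch, hlm, hX, h51, hkl2, hkub, hk15R, l2a, l2b]
end

section
/- Let p be a real number with 1/2 < p ≤ 1, let k ≥ 3 be a natural number, and let v_0, v_1, ..., v_k be real numbers satisfying: v_k = 1; v_k = p·v_{k−1}; v_{k−1} = p·v_{k−2}; v_j = (1−p)·v_{j+1} + p·v_{j−1} for all j with 2 ≤ j ≤ k−2; v_1 = v_0 + (1−p)·v_2; and v_0 = 1 + (1−p)·v_1. Then v_j ≤ 1/(2p−1) for every j with 0 ≤ j ≤ k. -/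
/-!
Write `B = 1 / (2p - 1)`. The net flow `p v_j - (1 - p) v_{j+1}` across the edge `j → j+1` is
the same on both sides of every interior state, so it equals its value `1` at the edge
`k-2 → k-1`; across the last edge it is `p ≤ 1`. Thus `p v_j ≤ 1 + (1 - p) v_{j+1}` for
`1 ≤ j < k`, and since `B` is the fixed point of `y ↦ (1 + (1 - p) y) / p`, the bound
`v_j ≤ B` propagates down from `v_k = 1 ≤ B`; finally `v_0 = 1 + (1 - p) v_1 ≤ p B ≤ B`.
-/

def netFlow (p : ℝ) (v : ℕ → ℝ) (j : ℕ) : ℝ := p * v j - (1 - p) * v (j + 1)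

lemma netFlow_eq_of_balance {p : ℝ} {v : ℕ → ℝ} {a b : ℕ} (hab : a ≤ b)
    (hbal : ∀ i, a < i → i ≤ b → v i = (1 - p) * v (i + 1) + p * v (i - 1)) :
    netFlow p v a = netFlow p v b := by
  induction b, hab using Nat.le_induction with
  | base => rfl
  | succ b hab ih =>
    have hbal_succ : v (b + 1) = (1 - p) * v (b + 2) + p * v b := by
      simpa using hbal (b + 1) (by omega) le_rfl
    rw [ih fun i hi hib => hbal i hi (by omega), netFlow, netFlow]
    linarith

lemma one_add_sub_mul_le {p y : ℝ} (hp₁ : 1 / 2 < p) (hp₂ : p ≤ 1) (hy : y ≤ 1 / (2 * p - 1)) :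
    1 + (1 - p) * y ≤ p * (1 / (2 * p - 1)) :=
  calc 1 + (1 - p) * y ≤ 1 + (1 - p) * (1 / (2 * p - 1)) := by gcongr
    _ = p * (1 / (2 * p - 1)) := by
      have hne : 2 * p - 1 ≠ 0 := by linarith
      rw [mul_one_div, mul_one_div, eq_div_iff hne, add_mul, div_mul_cancel₀ _ hne]
      ring

lemma le_of_netFlow_le_one {p : ℝ} {v : ℕ → ℝ} {j : ℕ} (hp₁ : 1 / 2 < p) (hp₂ : p ≤ 1)
    (hsucc : v (j + 1) ≤ 1 / (2 * p - 1)) (hflow : netFlow p v j ≤ 1) :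
    v j ≤ 1 / (2 * p - 1) := by
  have hbound := one_add_sub_mul_le hp₁ hp₂ hsucc
  unfold netFlow at hflow
  exact le_of_mul_le_mul_left (by linarith) (by linarith : (0 : ℝ) < p)

theorem markov_visits_le_general (p : ℝ) (hp₁ : 1 / 2 < p) (hp₂ : p ≤ 1)
    (k : ℕ) (v : ℕ → ℝ)
    (h1 : v k = 1)
    (h2 : v k = p * v (k - 1))
    (h3 : v (k - 1) = p * v (k - 2))
    (h4 : ∀ j, 2 ≤ j → j ≤ k - 2 → v j = (1 - p) * v (j + 1) + p * v (j - 1))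
    (h6 : v 0 = 1 + (1 - p) * v 1) :
    ∀ j ≤ k, v j ≤ 1 / (2 * p - 1) := by
  have hpos : 0 < 2 * p - 1 := by linarith
  have htop : v k ≤ 1 / (2 * p - 1) := by
    rw [h1, le_div_iff₀ hpos]
    linarith
  have hflow : ∀ j, 1 ≤ j → j < k → netFlow p v j ≤ 1 := by
    intro j hj hjk
    rcases (by omega : j ≤ k - 2 ∨ j = k - 1) with hj' | rfl
    · have hsucc : k - 2 + 1 = k - 1 := by omega
      rw [netFlow_eq_of_balance hj' fun i hi hik => h4 i (by omega) hik, netFlow, hsucc]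
      linarith [h1, h2, h3]
    · rw [netFlow, Nat.sub_add_cancel (by omega), ← h2, h1]
      linarith
  have hupper : ∀ j, j ≤ k → 1 ≤ j → v j ≤ 1 / (2 * p - 1) := by
    intro j hj
    induction hj using Nat.decreasingInduction with
    | self => exact fun _ => htop
    | of_succ j hjk ih =>
      exact fun hj => le_of_netFlow_le_one hp₁ hp₂ (ih (by omega)) (hflow j hj hjk)
  intro j hj
  rcases Nat.eq_zero_or_pos j with rfl | hj0
  · rcases Nat.eq_zero_or_pos k with rfl | hk
    · exact htop
    calc v 0 = 1 + (1 - p) * v 1 := h6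
      _ ≤ p * (1 / (2 * p - 1)) := one_add_sub_mul_le hp₁ hp₂ (hupper 1 hk le_rfl)
      _ ≤ 1 / (2 * p - 1) := mul_le_of_le_one_left (by positivity) hp₂
  · exact hupper j hj hj0

/-- Expected numbers of visits of the Markov chain `M̂(p,k)`: if
`1/2 < p ≤ 1`, `k ≥ 3`, and `v 0, …, v k` satisfy the listed linear system, then
`v j ≤ 1/(2p - 1)` for every `j ≤ k`. -/
theorem markov_visits_le (p : ℝ) (hp₁ : 1 / 2 < p) (hp₂ : p ≤ 1)
    (k : ℕ) (hk : 3 ≤ k) (v : ℕ → ℝ)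
    (h1 : v k = 1)
    (h2 : v k = p * v (k - 1))
    (h3 : v (k - 1) = p * v (k - 2))
    (h4 : ∀ j, 2 ≤ j → j ≤ k - 2 → v j = (1 - p) * v (j + 1) + p * v (j - 1))
    (h5 : v 1 = v 0 + (1 - p) * v 2)
    (h6 : v 0 = 1 + (1 - p) * v 1) :
    ∀ j ≤ k, v j ≤ 1 / (2 * p - 1) :=
  markov_visits_le_general p hp₁ hp₂ k v h1 h2 h3 h4 h6
end

section
/- Let p be a real number with 1/3 < p ≤ 1, p ≠ 1 allowed, let k ≥ 1 be a natural number, set β = 2(1−p)/(1+p), and let a_0, ..., a_k and b_0, ..., b_k be real numbers satisfying: b_k = 0; b_j = (1/2)·b_{j+1} + (1/2)·a_{j+1} for all j with 0 ≤ j ≤ k−1; a_j = p·(b_j + 1) + (1−p)·a_{j−1} for all j with 1 ≤ j ≤ k; and a_0 = 1 + b_0. Then a_0 = k·p/(3p−1) − 4p(1−2p)/(3p−1)^2 + ((1−p)/(3p−1))^2 · β^k, and moreover a_j = (k−j+2)p/(3p−1) − β^j·2p(1−p)/(3p−1)^2 + β^k·(1−p)^2/(3p−1)^2 and b_j = (k−j)p/(3p−1)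 − β^j·(1−p)^2/(3p−1)^2 + β^k·(1−p)^2/(3p−1)^2 for all j with 0 ≤ j ≤ k. -/
/-!
The system is affine, and the differences `u = a - a'`, `v = b - b'` of two solutions satisfy
`2 v j = v (j+1) + u (j+1)`, `u (j+1) = p v (j+1) + (1-p) u j` and `u 0 = v 0`; inductively
`u j = v j = u 0`, since eliminating `v (j+1)` gives `(1+p) u (j+1) = (1+p) u 0`. The boundary
condition `v k = 0` then forces every difference to vanish, so the solution is unique, and it
remains to check that the closed forms solve the system, which uses only `β (1+p) = 2 (1-p)`.
-/

structure IsTransitionSystem (p : ℝ) (k : ℕ) (a b : ℕ → ℝ) : Prop where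
  b_last : b k = 0
  b_step : ∀ j < k, b j = 1 / 2 * b (j + 1) + 1 / 2 * a (j + 1)
  a_step : ∀ j < k, a (j + 1) = p * (b (j + 1) + 1) + (1 - p) * a j
  a_zero : a 0 = 1 + b 0

namespace IsTransitionSystem

variable {p : ℝ} {k : ℕ} {a b a' b' : ℕ → ℝ}

theorem sub_eq_sub_zero (hp : 1 + p ≠ 0) (h : IsTransitionSystem p k a b)
    (h' : IsTransitionSystem p k a' b') :
    ∀ j ≤ k, a j - a' j = a 0 - a' 0 ∧ b j - b' j = a 0 - a' 0 := by
  intro j hj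
  induction j with
  | zero => exact ⟨rfl, by linear_combination h'.a_zero - h.a_zero⟩
  | succ n ih =>
    obtain ⟨hu, hv⟩ := ih (by omega)
    have hb := h.b_step n (by omega)
    have hb' := h'.b_step n (by omega)
    have ha := h.a_step n (by omega)
    have ha' := h'.a_step n (by omega)
    have hscaled : (1 + p) * (a (n + 1) - a' (n + 1) - (a 0 - a' 0)) = 0 := by
      linear_combination (ha - ha') - 2 * p * (hb - hb') + (1 - p) * hu + 2 * p * hv
    have hu' := sub_eq_zero.mp ((mul_eq_zero.mp hscaled).resolve_left hp)
    exact ⟨hu', by linear_combination 2 * hv - 2 * (hb - hb') - hu'⟩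

theorem unique (hp : 1 + p ≠ 0) (h : IsTransitionSystem p k a b)
    (h' : IsTransitionSystem p k a' b') : ∀ j ≤ k, a j = a' j ∧ b j = b' j := by
  have hconst := sub_eq_sub_zero hp h h'
  have hzero : a 0 - a' 0 = 0 := by
    rw [← (hconst k le_rfl).2, h.b_last, h'.b_last, sub_zero]
  intro j hj
  obtain ⟨ha, hb⟩ := hconst j hj
  exact ⟨sub_eq_zero.mp (ha.trans hzero), sub_eq_zero.mp (hb.trans hzero)⟩

end IsTransitionSystem

noncomputable def closedFormA (p β : ℝ) (k j : ℕ) : ℝ :=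
  ((k : ℝ) - j + 2) * p / (3 * p - 1) - β ^ j * (2 * p * (1 - p)) / (3 * p - 1) ^ 2
    + β ^ k * (1 - p) ^ 2 / (3 * p - 1) ^ 2

noncomputable def closedFormB (p β : ℝ) (k j : ℕ) : ℝ :=
  ((k : ℝ) - j) * p / (3 * p - 1) - β ^ j * (1 - p) ^ 2 / (3 * p - 1) ^ 2
    + β ^ k * (1 - p) ^ 2 / (3 * p - 1) ^ 2

theorem isTransitionSystem_closedForm {p β : ℝ} (hp : 3 * p - 1 ≠ 0)
    (hβ : β * (1 + p) = 2 * (1 - p)) (k : ℕ) :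
    IsTransitionSystem p k (closedFormA p β k) (closedFormB p β k) := by
  -- `field_simp` normalises the denominator to `p * 3 - 1` and looks for that form.
  have hp' : p * 3 - 1 ≠ 0 := by rwa [mul_comm]
  constructor
  case b_last => unfold closedFormB; ring
  case b_step =>
    intro j _
    unfold closedFormA closedFormB
    field_simp [hp']
    push_cast
    linear_combination (1 - p) * β ^ j * hβ
  case a_step =>
    intro j _
    unfold closedFormA closedFormB
    field_simp [hp']
    push_cast
    linear_combination -p * (1 - p) * β ^ j * hβ
  case a_zero =>
    unfold closedFormA closedFormB
    field_simp [hp']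
    ring

theorem closedFormA_zero {p β : ℝ} (hp : 3 * p - 1 ≠ 0) (k : ℕ) :
    closedFormA p β k 0 = (k : ℝ) * p / (3 * p - 1) - 4 * p * (1 - 2 * p) / (3 * p - 1) ^ 2
        + ((1 - p) / (3 * p - 1)) ^ 2 * β ^ k := by
  unfold closedFormA
  field_simp [show p * 3 - 1 ≠ 0 by rwa [mul_comm]]
  ring

theorem markov_AB_transitions_general (p β : ℝ) (hp₁ : 1 / 3 < p)
    (hβ : β = 2 * (1 - p) / (1 + p)) (k : ℕ) (a b : ℕ → ℝ)
    (hb1 : b k = 0)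
    (hb2 : ∀ j, j ≤ k - 1 → b j = (1 / 2) * b (j + 1) + (1 / 2) * a (j + 1))
    (ha1 : ∀ j, 1 ≤ j → j ≤ k → a j = p * (b j + 1) + (1 - p) * a (j - 1))
    (ha2 : a 0 = 1 + b 0) :
    a 0 = (k : ℝ) * p / (3 * p - 1) - 4 * p * (1 - 2 * p) / (3 * p - 1) ^ 2
        + ((1 - p) / (3 * p - 1)) ^ 2 * β ^ k
    ∧ (∀ j ≤ k, a j = ((k : ℝ) - j + 2) * p / (3 * p - 1)
        - β ^ j * (2 * p * (1 - p)) / (3 * p - 1) ^ 2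
        + β ^ k * (1 - p) ^ 2 / (3 * p - 1) ^ 2)
    ∧ (∀ j ≤ k, b j = ((k : ℝ) - j) * p / (3 * p - 1)
        - β ^ j * (1 - p) ^ 2 / (3 * p - 1) ^ 2
        + β ^ k * (1 - p) ^ 2 / (3 * p - 1) ^ 2) := by
  have hp : 3 * p - 1 ≠ 0 := by linarith
  have hp_one : 1 + p ≠ 0 := by linarith
  have hβ' : β * (1 + p) = 2 * (1 - p) := by rw [hβ, div_mul_cancel₀ _ hp_one]
  have hsys : IsTransitionSystem p k a b :=
    { b_last := hb1
      b_step := fun j hj => hb2 j (by omega)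
      a_step := fun j hj => ha1 (j + 1) (by omega) hj
      a_zero := ha2 }
  have hunique := hsys.unique hp_one (isTransitionSystem_closedForm hp hβ' k)
  refine ⟨?_, fun j hj => (hunique j hj).1, fun j hj => (hunique j hj).2⟩
  rw [(hunique 0 k.zero_le).1, closedFormA_zero hp]

/-- Expected numbers of `A→B` transitions of the Markov chain `N̂(p,k)`:
if `1/3 < p ≤ 1`, `β = 2(1-p)/(1+p)`, `k ≥ 1`, and `a, b` satisfy the listed linear
system, then `a 0 = kp/(3p-1) - 4p(1-2p)/(3p-1)² + ((1-p)/(3p-1))² β^k`, and moreover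
`a j = (k-j+2)p/(3p-1) - β^j·2p(1-p)/(3p-1)² + β^k (1-p)²/(3p-1)²` and
`b j = (k-j)p/(3p-1) - β^j (1-p)²/(3p-1)² + β^k (1-p)²/(3p-1)²` for all `j ≤ k`. -/
theorem markov_AB_transitions (p β : ℝ) (hp₁ : 1 / 3 < p) (hp₂ : p ≤ 1)
    (hβ : β = 2 * (1 - p) / (1 + p)) (k : ℕ) (hk : 1 ≤ k) (a b : ℕ → ℝ)
    (hb1 : b k = 0)
    (hb2 : ∀ j, j ≤ k - 1 → b j = (1 / 2) * b (j + 1) + (1 / 2) * a (j + 1))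
    (ha1 : ∀ j, 1 ≤ j → j ≤ k → a j = p * (b j + 1) + (1 - p) * a (j - 1))
    (ha2 : a 0 = 1 + b 0) :
    a 0 = (k : ℝ) * p / (3 * p - 1) - 4 * p * (1 - 2 * p) / (3 * p - 1) ^ 2
        + ((1 - p) / (3 * p - 1)) ^ 2 * β ^ k
    ∧ (∀ j ≤ k, a j = ((k : ℝ) - j + 2) * p / (3 * p - 1)
        - β ^ j * (2 * p * (1 - p)) / (3 * p - 1) ^ 2
        + β ^ k * (1 - p) ^ 2 / (3 * p - 1) ^ 2)
    ∧ (∀ j ≤ k, b j = ((k : ℝ) - j) * p / (3 * p - 1)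
        - β ^ j * (1 - p) ^ 2 / (3 * p - 1) ^ 2
        + β ^ k * (1 - p) ^ 2 / (3 * p - 1) ^ 2) :=
  markov_AB_transitions_general p β hp₁ hβ k a b hb1 hb2 ha1 ha2
end

section
/- Let p be a real number with 1/3 < p ≤ 1, set β = 2(1−p)/(1+p), let i ≤ k be natural numbers, and let a, b : {i, ..., k} → ℝ be the (unique) solution of the system: b(k) = 0; b(j) = (1/2)·b(j+1) + (1/2)·a(j+1) for all j with i ≤ j ≤ k−1; a(j) = p·b(j) + (1−p)·a(j−1) for all j with i+1 ≤ j ≤ k; and a(i) = 1. Then b(j) ≤ ((1−p)/(2p))·β^{j−i} for all j with i ≤ j ≤ k; in particular b(i) ≤ (1−p)/(2p), and hence 1/(1 − b(i)) ≤ 2p/(3p−1). -/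
/-- Hitting probabilities of state `A_i` in the Markov chain `N̂(p,k)`:
if `1/3 < p ≤ 1`, `β = 2(1-p)/(1+p)`, `i ≤ k`, and `a, b` satisfy the listed linear
system, then `b j ≤ ((1-p)/(2p)) β^(j-i)` for all `i ≤ j ≤ k`; in particular
`b i ≤ (1-p)/(2p)` and hence `1/(1 - b i) ≤ 2p/(3p-1)`. -/
theorem markov_hitting_prob_bound (p β : ℝ) (hp₁ : 1 / 3 < p) (hp₂ : p ≤ 1)
    (hβ : β = 2 * (1 - p) / (1 + p)) (i k : ℕ) (hik : i ≤ k) (a b : ℕ → ℝ)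
    (hb1 : b k = 0)
    (hb2 : ∀ j, i ≤ j → j + 1 ≤ k → b j = (1 / 2) * b (j + 1) + (1 / 2) * a (j + 1))
    (ha1 : ∀ j, i + 1 ≤ j → j ≤ k → a j = p * b j + (1 - p) * a (j - 1))
    (ha2 : a i = 1) :
    (∀ j, i ≤ j → j ≤ k → b j ≤ ((1 - p) / (2 * p)) * β ^ (j - i))
    ∧ b i ≤ (1 - p) / (2 * p)
    ∧ 1 / (1 - b i) ≤ 2 * p / (3 * p - 1) := by
  have hp0 : 0 < p := by linarith
  have hp3 : 0 < 3 * p - 1 := by linarith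
  have h1p : (0:ℝ) < 1 + p := by linarith
  have h1mp : (0:ℝ) ≤ 1 - p := by linarith
  have hβ' : β * (1 + p) = 2 * (1 - p) := by
    rw [hβ]; field_simp
  have hβ0 : 0 ≤ β := by
    rw [hβ]; positivity
  have hβ1 : β ≤ 1 := by
    rw [hβ, div_le_one h1p]; linarith
  -- the two invariants
  have key : ∀ j, i ≤ j → j ≤ k →
      (2 * p * b j - (1 - p) * a j = 2 * p * b i - (1 - p)
        ∧ a j - b j = (1 - b i) * β ^ (j - i)) := by
    intro j hij
    induction j, hij using Nat.le_induction with
    | base =>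
      intro _
      constructor
      · rw [ha2]; ring
      · simp [ha2]
    | succ n hn ih =>
      intro hnk
      have hn1 : n ≤ k := le_trans (Nat.le_succ n) hnk
      obtain ⟨ih1, ih2⟩ := ih hn1
      have e1 : b n = (1/2) * b (n+1) + (1/2) * a (n+1) := hb2 n hn hnk
      have e2 : a (n+1) = p * b (n+1) + (1 - p) * a n := by
        have := ha1 (n+1) (by omega) hnk
        simpa using this
      have hpow : β ^ (n + 1 - i) = β * β ^ (n - i) := by
        rw [show n + 1 - i = (n - i) + 1 by omega, pow_succ]; ring
      have f1 : b (n+1) = 2 * b n - a (n+1) := by linarith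
      have f2 : (1 + p) * a (n+1) = 2 * p * b n + (1 - p) * a n := by
        rw [f1] at e2; linarith
      constructor
      · -- eigenvalue 1 invariant
        have : 2 * p * b (n+1) - (1 - p) * a (n+1)
            = 2 * p * b n - (1 - p) * a n := by
          rw [f1]; linarith
        linarith
      · -- eigenvalue β decay
        have h2 : (1 + p) * (a (n+1) - b (n+1)) = (1 + p) * (β * (a n - b n)) := by
          rw [f1]
          linear_combination 2 * f2 - (a n - b n) * hβ'
        have h3 : a (n+1) - b (n+1) = β * (a n - b n) :=
          mul_left_cancel₀ (by linarith) h2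
        rw [hpow, h3, ih2]; ring
  -- evaluate invariants at k
  obtain ⟨e3, e4⟩ := key k hik le_rfl
  rw [hb1] at e3 e4
  have hQ0 : 0 ≤ β ^ (k - i) := pow_nonneg hβ0 _
  have hQ1 : β ^ (k - i) ≤ 1 := pow_le_one₀ hβ0 hβ1
  have hD : 0 < 2 * p - (1 - p) * β ^ (k - i) := by
    nlinarith [mul_le_of_le_one_right h1mp hQ1]
  have hbi : (2 * p - (1 - p) * β ^ (k - i)) * b i
      = (1 - p) * (1 - β ^ (k - i)) := by
    linear_combination (-1 : ℝ) * e3 - (1 - p) * e4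
  have hbi1 : (2 * p - (1 - p) * β ^ (k - i)) * (1 - b i) = 3 * p - 1 := by
    linear_combination -hbi
  -- first (main) claim
  have main : ∀ j, i ≤ j → j ≤ k → b j ≤ ((1 - p) / (2 * p)) * β ^ (j - i) := by
    intro j hij hjk
    obtain ⟨e1, e2⟩ := key j hij hjk
    have hX0 : 0 ≤ β ^ (j - i) := pow_nonneg hβ0 _
    have hX1 : β ^ (j - i) ≤ 1 := pow_le_one₀ hβ0 hβ1
    have hbj : (2 * p - (1 - p) * β ^ (k - i)) * (3 * p - 1) * b j
        = (3 * p - 1) * (1 - p) * (β ^ (j - i) - β ^ (k - i)) := by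
      linear_combination (2 * p - (1 - p) * β ^ (k - i)) * e1
        + (2 * p - (1 - p) * β ^ (k - i)) * (1 - p) * e2
        + (2 * p - (1 - p) * β ^ (j - i)) * hbi
    have hXp : 0 ≤ 2 * p - (1 - p) * β ^ (j - i) := by
      nlinarith [mul_le_of_le_one_right h1mp hX1]
    have hkey : 0 ≤ (3 * p - 1) * (1 - p) * β ^ (k - i)
        * (2 * p - (1 - p) * β ^ (j - i)) := by positivity
    have hscaled : ((2 * p - (1 - p) * β ^ (k - i)) * (3 * p - 1)) * (2 * p * b j)
        ≤ ((2 * p - (1 - p) * β ^ (k - i)) * (3 * p - 1)) * ((1 - p) * β ^ (j - i)) := by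
      nlinarith [hbj, hkey]
    have h2p : 2 * p * b j ≤ (1 - p) * β ^ (j - i) :=
      le_of_mul_le_mul_left hscaled (by positivity)
    have hrw : ((1 - p) / (2 * p)) * β ^ (j - i) = ((1 - p) * β ^ (j - i)) / (2 * p) := by
      ring
    rw [hrw, le_div_iff₀ (by positivity : (0:ℝ) < 2 * p)]
    linarith
  refine ⟨main, ?_, ?_⟩
  · have := main i le_rfl hik
    simpa using this
  · have h1bi : 1 - b i = (3 * p - 1) / (2 * p - (1 - p) * β ^ (k - i)) := by
      rw [eq_div_iff hD.ne']; linarith [hbi1]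
    rw [h1bi, one_div_div, div_le_div_iff₀ hp3 hp3]
    nlinarith [mul_nonneg h1mp hQ0]
end

section
/- For all natural numbers n ≥ 1 and r ≥ 1 it holds that sum_{i=1}^{n} [ i·2^{−(r+1)}·(1 − 2^{−r})^{i−1} + (1 − 2^{−r})^i − (1 − 2^{−(r−1)})^i − i·2^{−r}·(1 − 2^{−(r−1)})^{i−1} ] = 2^{r−1}·[ 3/2 + ((1 − 2^{−r})^n − (1 − 2^{−(r−1)})^n)·(2^{−(r−1)} − n·2^{−r} − 3/2) − (3/2)·(1 − 2^{−r})^n ]. -/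
lemma alpha_aux (x : ℝ) (hx : x ≠ 0) (n : ℕ) :
    ∑ i ∈ Finset.Icc 1 n,
        ((i : ℝ) * (x / 2) * (1 - x) ^ (i - 1)
          + (1 - x) ^ i - (1 - 2 * x) ^ i
          - (i : ℝ) * x * (1 - 2 * x) ^ (i - 1))
      = (1 / (2 * x)) *
          (3 / 2 + ((1 - x) ^ n - (1 - 2 * x) ^ n) * (2 * x - (n : ℝ) * x - 3 / 2)
            - (3 / 2) * (1 - x) ^ n) := by
  induction n with
  | zero => simp
  | succ n ih =>
      rw [Finset.sum_Icc_succ_top (by omega : 1 ≤ n + 1), ih]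
      have h1 : n + 1 - 1 = n := rfl
      rw [h1, pow_succ (1 - x) n, pow_succ (1 - 2 * x) n]
      push_cast
      field_simp
      ring

/-- Closed form of `α(r,n)` for `n ≥ 1`, `r ≥ 1`:
`∑_{i=1}^n [ i·2^{-(r+1)}(1-2^{-r})^{i-1} + (1-2^{-r})^i - (1-2^{-(r-1)})^i
  - i·2^{-r}(1-2^{-(r-1)})^{i-1} ]
 = 2^{r-1}[ 3/2 + ((1-2^{-r})^n - (1-2^{-(r-1)})^n)(2^{-(r-1)} - n·2^{-r} - 3/2)
  - (3/2)(1-2^{-r})^n ]`. -/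
theorem alpha_closed_form (n r : ℕ) (hn : 1 ≤ n) (hr : 1 ≤ r) :
    ∑ i ∈ Finset.Icc 1 n,
        ((i : ℝ) * (2 : ℝ) ^ (-(r : ℤ) - 1) * (1 - (2 : ℝ) ^ (-(r : ℤ))) ^ (i - 1)
          + (1 - (2 : ℝ) ^ (-(r : ℤ))) ^ i
          - (1 - (2 : ℝ) ^ (-(r : ℤ) + 1)) ^ i
          - (i : ℝ) * (2 : ℝ) ^ (-(r : ℤ)) * (1 - (2 : ℝ) ^ (-(r : ℤ) + 1)) ^ (i - 1))
      = (2 : ℝ) ^ ((r : ℤ) - 1) *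
          (3 / 2
            + ((1 - (2 : ℝ) ^ (-(r : ℤ))) ^ n - (1 - (2 : ℝ) ^ (-(r : ℤ) + 1)) ^ n)
              * ((2 : ℝ) ^ (-(r : ℤ) + 1) - (n : ℝ) * (2 : ℝ) ^ (-(r : ℤ)) - 3 / 2)
            - (3 / 2) * (1 - (2 : ℝ) ^ (-(r : ℤ))) ^ n) := by
  set x : ℝ := (2 : ℝ) ^ (-(r : ℤ)) with hxdef
  have hx : x ≠ 0 := by positivity
  have h1 : (2 : ℝ) ^ (-(r : ℤ) - 1) = x / 2 := by
    rw [hxdef, zpow_sub₀ (by norm_num : (2:ℝ) ≠ 0)]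
    norm_num
  have h2 : (2 : ℝ) ^ (-(r : ℤ) + 1) = 2 * x := by
    rw [hxdef, zpow_add₀ (by norm_num : (2:ℝ) ≠ 0)]
    ring_nf
  have h3 : (2 : ℝ) ^ ((r : ℤ) - 1) = 1 / (2 * x) := by
    rw [← h2, one_div, ← zpow_neg]
    congr 1
    ring
  rw [h1, h2, h3]
  exact alpha_aux x hx n
end

section
/- For every natural number n and every integer r with 1 ≤ r ≤ ⌈log_2 n⌉ − 3 it holds that sum_{i=1}^{n} [ i·2^{−(r+1)}·(1 − 2^{−r})^{i−1} + (1 − 2^{−r})^i − (1 − 2^{−(r−1)})^i − i·2^{−r}·(1 − 2^{−(r−1)})^{i−1} ] ≥ 2^{r−1}. -/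
/-!
With `p = 2^{-r}` the sum `α` has, by induction on `n`, the closed form
`4 p α = 3 - 2 (1-p)^n (3 - 2p + np) + (1-2p)^n (3 - 4p + 2np)`.
The last term is nonnegative, and since `n > 2^{r+2}` gives `np ≥ 4`, the bounds
`(1-p)^n ≤ e^{-np}` and `2 (t + 3) ≤ e^t` for `t ≥ 4` make the middle term at most `1`.
Hence `4 p α ≥ 2`, i.e. `α ≥ 1 / (2p) = 2^{r-1}`.
-/

open Finset Real

/-- `α(r, n)` written in terms of `p = 2^{-r}`. -/
noncomputable def alphaSum (p : ℝ) (n : ℕ) : ℝ :=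
  ∑ i ∈ Icc 1 n,
    ((i : ℝ) * (p / 2) * (1 - p) ^ (i - 1) + (1 - p) ^ i - (1 - 2 * p) ^ i
      - (i : ℝ) * p * (1 - 2 * p) ^ (i - 1))

theorem four_mul_mul_alphaSum (p : ℝ) (n : ℕ) :
    4 * p * alphaSum p n
      = 3 - 2 * (1 - p) ^ n * (3 - 2 * p + n * p)
          + (1 - 2 * p) ^ n * (3 - 4 * p + 2 * n * p) := by
  induction n with
  | zero => simp [alphaSum]; ring
  | succ m ih =>
    rw [alphaSum, sum_Icc_succ_top (by omega), mul_add, ← alphaSum, ih, Nat.add_sub_cancel]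
    push_cast
    ring

theorem two_mul_add_three_le_exp {t : ℝ} (ht : 4 ≤ t) : 2 * (t + 3) ≤ exp t := by
  have h := sum_le_exp_of_nonneg (by linarith : 0 ≤ t) 4
  simp only [sum_range_succ, sum_range_zero, Nat.factorial] at h
  norm_num at h
  nlinarith

theorem two_mul_one_sub_pow_mul_le_one {p : ℝ} {n : ℕ} (hp₀ : 0 ≤ p) (hp₁ : p ≤ 1)
    (h : 4 ≤ n * p) : 2 * (1 - p) ^ n * (3 - 2 * p + n * p) ≤ 1 := by
  have hpow : (1 - p) ^ n ≤ exp (-(n * p)) := by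
    calc (1 - p) ^ n ≤ exp (-p) ^ n :=
          pow_le_pow_left₀ (by linarith) (one_sub_le_exp_neg p) n
      _ = exp (-(n * p)) := by rw [← exp_nat_mul]; ring_nf
  have hexp := two_mul_add_three_le_exp h
  calc 2 * (1 - p) ^ n * (3 - 2 * p + n * p)
      ≤ exp (-(n * p)) * (2 * (n * p + 3)) := by
        rw [mul_comm 2, mul_assoc]
        exact mul_le_mul hpow (by linarith) (by linarith) (exp_pos _).le
    _ ≤ exp (-(n * p)) * exp (n * p) := by gcongr
    _ = 1 := by rw [← exp_add, neg_add_cancel, exp_zero]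

theorem inv_two_mul_le_alphaSum {p : ℝ} {n : ℕ} (hp₀ : 0 < p) (hp₁ : p ≤ 1 / 2)
    (h : 4 ≤ n * p) : (2 * p)⁻¹ ≤ alphaSum p n := by
  have htail := two_mul_one_sub_pow_mul_le_one hp₀.le (by linarith) h
  have hpos : 0 ≤ (1 - 2 * p) ^ n * (3 - 4 * p + 2 * n * p) :=
    mul_nonneg (pow_nonneg (by linarith) n) (by linarith)
  have hsum : 2 ≤ 4 * p * alphaSum p n := by rw [four_mul_mul_alphaSum]; linarith
  rw [inv_le_iff_one_le_mul₀ (by positivity)]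
  linarith

theorem zpow_lt_of_lt_ceil_logb {b : ℝ} (hb : 1 < b) {n : ℕ} {k : ℤ} (hk : 0 ≤ k)
    (h : k < ⌈logb b n⌉) : b ^ k < n := by
  have hn : (0 : ℝ) < n := by
    rcases Nat.eq_zero_or_pos n with rfl | hn
    · simp at h; omega
    · exact_mod_cast hn
  rw [← rpow_intCast, ← lt_logb_iff_rpow_lt hb hn]
  exact Int.lt_ceil.mp h

/-- For every natural number `n` and every integer `r` with
`1 ≤ r ≤ ⌈log₂ n⌉ - 3`, it holds that `α(r,n) ≥ 2^{r-1}`. -/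
theorem alpha_ge (n : ℕ) (r : ℤ) (hr₁ : 1 ≤ r) (hr₂ : r ≤ ⌈Real.logb 2 n⌉ - 3) :
    ∑ i ∈ Finset.Icc 1 n,
        ((i : ℝ) * (2 : ℝ) ^ (-r - 1) * (1 - (2 : ℝ) ^ (-r)) ^ (i - 1)
          + (1 - (2 : ℝ) ^ (-r)) ^ i
          - (1 - (2 : ℝ) ^ (-r + 1)) ^ i
          - (i : ℝ) * (2 : ℝ) ^ (-r) * (1 - (2 : ℝ) ^ (-r + 1)) ^ (i - 1))
      ≥ (2 : ℝ) ^ (r - 1) := by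
  set p : ℝ := 2 ^ (-r)
  have hp₀ : 0 < p := by positivity
  have hhalf : (2 : ℝ) ^ (-r - 1) = p / 2 := by rw [zpow_sub_one₀ two_ne_zero]; ring
  have hdouble : (2 : ℝ) ^ (-r + 1) = 2 * p := by rw [zpow_add_one₀ two_ne_zero]; ring
  have hinv : (2 : ℝ) ^ (r - 1) = (2 * p)⁻¹ := by
    rw [← hdouble, ← zpow_neg, neg_add, neg_neg, sub_eq_add_neg]
  have hp₁ : p ≤ 1 / 2 := by
    rw [one_div, ← zpow_neg_one]
    exact zpow_le_zpow_right₀ one_le_two (by omega)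
  have hn : 4 ≤ n * p := by
    have hlt := zpow_lt_of_lt_ceil_logb one_lt_two (n := n) (by omega : 0 ≤ r + 2) (by omega)
    calc (4 : ℝ) = 2 ^ (r + 2) * p := by rw [← zpow_add₀ two_ne_zero]; norm_num
      _ ≤ n * p := by gcongr
  rw [hhalf, hdouble, hinv, ge_iff_le]
  exact inv_two_mul_le_alphaSum hp₀ hp₁ hn
end

section
/- Let x, x_1, ..., x_n be i.i.d. nonnegative integrable real random variables with common continuous cumulative distribution function F satisfying F(0) = 0. Then sum_{i=1}^n E[ min{x_1, ..., x_i} ] ≥ E[x] + sum_{i=1}^{⌊log_2 n⌋} 2^{i−1} · ∫_0^∞ (1 − F(x))^{2^i} dx. -/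
/-!
Write `m_i` for the minimum of the first `i + 1` draws, so the left-hand side is `∑_{i<n} E[m_i]`.
By independence `P(m_i > t) = (1 - F t)^(i+1)`, and the layer-cake formula turns this into
`E[m_i] = ∫_0^∞ (1 - F t)^(i+1) dt`. The sequence `E[m_i]` is antitone, so each dyadic block
`2^(j-1) ≤ i < 2^j` of the sum contributes at least `2^(j-1) E[m_{2^j - 1}]`; summing the blocks up to
`j = ⌊log₂ n⌋` and keeping `E[m_0] = E[x]` gives the bound.
-/

open MeasureTheory ProbabilityTheory Finset

theorem Antitone.pow_mul_le_sum_Ico_pow {g : ℕ → ℝ} (hg : Antitone g) (L : ℕ) :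
    (2 : ℝ) ^ L * g (2 ^ (L + 1) - 1) ≤ ∑ k ∈ Ico (2 ^ L) (2 ^ (L + 1)), g k := by
  have hcard : #(Ico (2 ^ L) (2 ^ (L + 1))) = 2 ^ L := by
    rw [Nat.card_Ico, pow_succ]
    omega
  calc (2 : ℝ) ^ L * g (2 ^ (L + 1) - 1)
      = ∑ _k ∈ Ico (2 ^ L) (2 ^ (L + 1)), g (2 ^ (L + 1) - 1) := by
        rw [sum_const, hcard, nsmul_eq_mul]
        push_cast
        ring
    _ ≤ ∑ k ∈ Ico (2 ^ L) (2 ^ (L + 1)), g k :=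
        sum_le_sum fun k hk => hg (by have := mem_Ico.1 hk; omega)

theorem Antitone.add_sum_dyadic_le_sum_range {g : ℕ → ℝ} (hg : Antitone g) (L : ℕ) :
    g 0 + ∑ i ∈ Icc 1 L, (2 : ℝ) ^ (i - 1) * g (2 ^ i - 1) ≤ ∑ k ∈ range (2 ^ L), g k := by
  induction L with
  | zero => simp
  | succ L ih =>
    rw [sum_Icc_succ_top (by omega),
      ← sum_range_add_sum_Ico g (Nat.pow_le_pow_right two_pos L.le_succ), Nat.add_sub_cancel]
    linarith [hg.pow_mul_le_sum_Ico_pow L]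

section PartialMin

variable {Ω : Type*} {X : ℕ → Ω → ℝ}

noncomputable def partialMin (X : ℕ → Ω → ℝ) (i : ℕ) (ω : Ω) : ℝ :=
  (range (i + 1)).inf' nonempty_range_add_one fun j => X j ω

@[simp]
theorem partialMin_zero : partialMin X 0 = X 0 := by
  funext ω
  simp [partialMin]

theorem partialMin_succ (i : ℕ) :
    partialMin X (i + 1) = fun ω => X (i + 1) ω ⊓ partialMin X i ω := by
  funext ω
  simp [partialMin, range_add_one]

theorem lt_partialMin_iff {i : ℕ} {ω : Ω} {t : ℝ} :
    t < partialMin X i ω ↔ ∀ j ∈ range (i + 1), t < X j ω :=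
  lt_inf'_iff _

theorem partialMin_antitone (ω : Ω) : Antitone fun i => partialMin X i ω :=
  fun _ _ hab => le_inf' _ _ fun _ hj =>
    inf'_le _ (range_subset_range.2 (Nat.succ_le_succ hab) hj)

variable [MeasurableSpace Ω] {P : Measure Ω}

theorem measurable_partialMin (hmeas : ∀ i, Measurable (X i)) (i : ℕ) :
    Measurable (partialMin X i) := by
  induction i with
  | zero => simpa using hmeas 0
  | succ i ih => rw [partialMin_succ]; exact (hmeas (i + 1)).inf ih

theorem partialMin_nonneg (hnonneg : ∀ i, 0 ≤ᵐ[P] X i) (i : ℕ) : 0 ≤ᵐ[P] partialMin X i := by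
  filter_upwards [ae_all_iff.2 hnonneg] with ω hω
  exact le_inf' _ _ fun j _ => hω j

theorem integrable_partialMin (hmeas : ∀ i, Measurable (X i)) (hint : Integrable (X 0) P)
    (hnonneg : ∀ i, 0 ≤ᵐ[P] X i) (i : ℕ) : Integrable (partialMin X i) P := by
  refine hint.mono (measurable_partialMin hmeas i).aestronglyMeasurable ?_
  filter_upwards [partialMin_nonneg hnonneg i, hnonneg 0] with ω hmin h0
  rw [Real.norm_of_nonneg hmin, Real.norm_of_nonneg h0]
  exact partialMin_antitone ω (Nat.zero_le i)

theorem measureReal_lt_partialMin {μ : Measure ℝ} (hmeas : ∀ i, Measurable (X i))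
    (hindep : iIndepFun X P) (hlaw : ∀ i, P.map (X i) = μ) (i : ℕ) (t : ℝ) :
    P.real {ω | t < partialMin X i ω} = μ.real (Set.Ioi t) ^ (i + 1) := by
  have hset : {ω | t < partialMin X i ω} = ⋂ j ∈ range (i + 1), X j ⁻¹' Set.Ioi t := by
    ext ω
    simp [lt_partialMin_iff]
  have hlaw_Ioi : ∀ j, P (X j ⁻¹' Set.Ioi t) = μ (Set.Ioi t) := fun j => by
    rw [← hlaw j, Measure.map_apply (hmeas j) measurableSet_Ioi]
  rw [measureReal_def, hset, hindep.meas_biInter fun j _ => ⟨Set.Ioi t, measurableSet_Ioi, rfl⟩,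
    prod_congr rfl fun j _ => hlaw_Ioi j, prod_const, card_range, ENNReal.toReal_pow,
    measureReal_def]

theorem integral_partialMin {μ : Measure ℝ} (hmeas : ∀ i, Measurable (X i))
    (hindep : iIndepFun X P) (hlaw : ∀ i, P.map (X i) = μ) (hint : Integrable (X 0) P)
    (hnonneg : ∀ i, 0 ≤ᵐ[P] X i) (i : ℕ) :
    ∫ ω, partialMin X i ω ∂P = ∫ t in Set.Ioi 0, μ.real (Set.Ioi t) ^ (i + 1) := by
  rw [(integrable_partialMin hmeas hint hnonneg i).integral_eq_integral_meas_lt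
    (partialMin_nonneg hnonneg i)]
  simp_rw [measureReal_lt_partialMin hmeas hindep hlaw i]

end PartialMin

theorem offline_opt_lower_bound_unknown_dist_general
    {Ω : Type*} [MeasureSpace Ω] [IsProbabilityMeasure (ℙ : Measure Ω)]
    (n : ℕ) (hn : 1 ≤ n) (X : ℕ → Ω → ℝ) (μ : Measure ℝ)
    (hmeas : ∀ i, Measurable (X i))
    (hindep : iIndepFun X ℙ)
    (hlaw : ∀ i, Measure.map (X i) ℙ = μ)
    (hint : ∀ i, Integrable (X i) ℙ)
    (hnonneg : ∀ i, 0 ≤ᵐ[ℙ] X i)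
    (F : ℝ → ℝ) (hF : ∀ t, F t = (μ (Set.Iic t)).toReal) :
    ∑ i ∈ Finset.range n,
        ∫ ω, (Finset.range (i + 1)).inf' Finset.nonempty_range_add_one (fun j => X j ω) ∂ℙ
      ≥ (∫ t, t ∂μ)
        + ∑ i ∈ Finset.Icc 1 (Nat.log 2 n),
            (2 : ℝ) ^ (i - 1) * ∫ t in Set.Ioi (0 : ℝ), (1 - F t) ^ (2 ^ i) := by
  have : IsProbabilityMeasure μ := hlaw 0 ▸ Measure.isProbabilityMeasure_map (hmeas 0).aemeasurable
  set g : ℕ → ℝ := fun i => ∫ ω, partialMin X i ω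
  have hg_antitone : Antitone g := fun a b hab =>
    integral_mono (integrable_partialMin hmeas (hint 0) hnonneg b)
      (integrable_partialMin hmeas (hint 0) hnonneg a) fun ω => partialMin_antitone ω hab
  have hg0 : g 0 = ∫ t, t ∂μ := by
    simp only [g, partialMin_zero]
    rw [← hlaw 0]
    exact (integral_map (hmeas 0).aemeasurable aestronglyMeasurable_id).symm
  have hg_pow : ∀ i, g (2 ^ i - 1) = ∫ t in Set.Ioi (0 : ℝ), (1 - F t) ^ (2 ^ i) := by
    intro i
    simp only [g, integral_partialMin hmeas hindep hlaw (hint 0) hnonneg, Nat.sub_add_cancel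
      Nat.one_le_two_pow, ← Set.compl_Iic, probReal_compl_eq_one_sub measurableSet_Iic, hF,
      measureReal_def]
  calc (∫ t, t ∂μ) + ∑ i ∈ Icc 1 (Nat.log 2 n),
        (2 : ℝ) ^ (i - 1) * ∫ t in Set.Ioi (0 : ℝ), (1 - F t) ^ (2 ^ i)
      = g 0 + ∑ i ∈ Icc 1 (Nat.log 2 n), (2 : ℝ) ^ (i - 1) * g (2 ^ i - 1) := by
        rw [hg0]
        exact congrArg _ (sum_congr rfl fun i _ => by rw [hg_pow i])
    _ ≤ ∑ k ∈ range (2 ^ Nat.log 2 n), g k := hg_antitone.add_sum_dyadic_le_sum_range _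
    _ ≤ ∑ i ∈ range n, g i :=
        sum_le_sum_of_subset_of_nonneg (range_subset_range.2 (Nat.pow_log_le_self 2 (by omega)))
          fun i _ _ => integral_nonneg_of_ae (partialMin_nonneg hnonneg i)

/-- Quantile-free lower bound on the expected offline optimum:
for i.i.d. nonnegative integrable random variables with continuous cdf `F` and `F 0 = 0`,
`∑_{i=1}^n E[min {x_1,…,x_i}] ≥ E[x] + ∑_{i=1}^{⌊log₂ n⌋} 2^{i-1} ∫_0^∞ (1-F t)^{2^i} dt`. -/
theorem offline_opt_lower_bound_unknown_dist
    {Ω : Type*} [MeasureSpace Ω] [IsProbabilityMeasure (ℙ : Measure Ω)]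
    (n : ℕ) (hn : 1 ≤ n) (X : ℕ → Ω → ℝ) (μ : Measure ℝ)
    (hmeas : ∀ i, Measurable (X i))
    (hindep : iIndepFun X ℙ)
    (hlaw : ∀ i, Measure.map (X i) ℙ = μ)
    (hint : ∀ i, Integrable (X i) ℙ)
    (hnonneg : ∀ i, 0 ≤ᵐ[ℙ] X i)
    (F : ℝ → ℝ) (hF : ∀ t, F t = (μ (Set.Iic t)).toReal)
    (hFcont : Continuous F) (hF0 : F 0 = 0) :
    ∑ i ∈ Finset.range n,
        ∫ ω, (Finset.range (i + 1)).inf' Finset.nonempty_range_add_one (fun j => X j ω) ∂ℙ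
      ≥ (∫ t, t ∂μ)
        + ∑ i ∈ Finset.Icc 1 (Nat.log 2 n),
            (2 : ℝ) ^ (i - 1) * ∫ t in Set.Ioi (0 : ℝ), (1 - F t) ^ (2 ^ i) :=
  offline_opt_lower_bound_unknown_dist_general n hn X μ hmeas hindep hlaw hint hnonneg F hF
end

section
/- Let E : ℕ → ℝ be defined by E(1) = 1/2 and E(n) = E(n−1) + 1/2 − E(n−1)^2/(2(n−1)) for all n ≥ 2. Then √(n+1) − 1 ≤ E(n) ≤ √n for all n ≥ 1. -/
set_option maxHeartbeats 1000000 in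
/-- If `E 1 = 1/2` and `E n = E (n-1) + 1/2 - E (n-1)²/(2(n-1))` for
`n ≥ 2`, then `√(n+1) - 1 ≤ E n ≤ √n` for all `n ≥ 1`. -/
theorem sequential_cost_bounds (E : ℕ → ℝ)
    (hE1 : E 1 = 1 / 2)
    (hErec : ∀ n, 2 ≤ n → E n = E (n - 1) + 1 / 2 - (E (n - 1)) ^ 2 / (2 * ((n : ℝ) - 1))) :
    ∀ n : ℕ, 1 ≤ n → Real.sqrt ((n : ℝ) + 1) - 1 ≤ E n ∧ E n ≤ Real.sqrt n := by
  intro n hn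
  induction n with
  | zero => omega
  | succ m ih =>
    rcases Nat.eq_or_lt_of_le hn with h1 | h1
    · -- m + 1 = 1
      have hm : m = 0 := by omega
      subst hm
      rw [hE1]
      have h2 : Real.sqrt 2 ≤ 3 / 2 := by
        nlinarith [Real.sqrt_nonneg 2, Real.sq_sqrt (by norm_num : (0:ℝ) ≤ 2)]
      refine ⟨?_, ?_⟩
      · have : ((0 + 1 : ℕ) : ℝ) + 1 = 2 := by push_cast; ring
        rw [this]; linarith
      · have : ((0 + 1 : ℕ) : ℝ) = 1 := by push_cast; ring
        rw [this, Real.sqrt_one]; norm_num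
    · have hm1 : 1 ≤ m := by omega
      obtain ⟨hlo, hhi⟩ := ih hm1
      have hrec := hErec (m + 1) (by omega)
      simp only [Nat.add_sub_cancel] at hrec
      have hcast : ((m + 1 : ℕ) : ℝ) - 1 = (m : ℝ) := by push_cast; ring
      rw [hcast] at hrec
      set a := E m with ha
      have hmR : (1 : ℝ) ≤ (m : ℝ) := by exact_mod_cast hm1
      have s1 := Real.sqrt_nonneg (m : ℝ)
      have s2 := Real.sqrt_nonneg ((m : ℝ) + 1)
      have s3 := Real.sqrt_nonneg ((m : ℝ) + 2)
      have q1 : Real.sqrt (m : ℝ) ^ 2 = (m : ℝ) := Real.sq_sqrt (by linarith)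
      have q2 : Real.sqrt ((m : ℝ) + 1) ^ 2 = (m : ℝ) + 1 := Real.sq_sqrt (by linarith)
      have q3 : Real.sqrt ((m : ℝ) + 2) ^ 2 = (m : ℝ) + 2 := Real.sq_sqrt (by linarith)
      have hs1m : Real.sqrt (m : ℝ) ≤ (m : ℝ) := by nlinarith
      have hs2le : Real.sqrt ((m : ℝ) + 1) ≤ ((m : ℝ) + 2) / 2 := by nlinarith
      have hs2ge1 : (1 : ℝ) ≤ Real.sqrt ((m : ℝ) + 1) := by nlinarith
      -- key inequality: (m+1) * s2 - 1 ≥ m * s3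
      have key : (m : ℝ) * Real.sqrt ((m : ℝ) + 2) ≤ ((m : ℝ) + 1) * Real.sqrt ((m : ℝ) + 1) - 1 := by
        have ht : (0:ℝ) ≤ ((m : ℝ) + 1) * Real.sqrt ((m : ℝ) + 1) - 1 := by nlinarith
        have hm0 : (0:ℝ) ≤ (m:ℝ) := by linarith
        have hsq : ((m : ℝ) * Real.sqrt ((m : ℝ) + 2)) ^ 2 ≤ (((m : ℝ) + 1) * Real.sqrt ((m : ℝ) + 1) - 1) ^ 2 := by
          have e1 : ((m:ℝ) * Real.sqrt ((m : ℝ) + 2)) ^ 2 = (m:ℝ)^2 * ((m:ℝ) + 2) := by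
            rw [mul_pow, q3]
          have e2 : (((m : ℝ) + 1) * Real.sqrt ((m : ℝ) + 1) - 1) ^ 2
              = ((m:ℝ)+1)^2 * (Real.sqrt ((m:ℝ)+1))^2 - 2*((m:ℝ)+1)*Real.sqrt ((m:ℝ)+1) + 1 := by
            ring
          rw [e1, e2, q2]
          have h3 : 2*((m:ℝ)+1)*Real.sqrt ((m:ℝ)+1) ≤ ((m:ℝ)+1)*((m:ℝ)+2) := by
            nlinarith [hs2le, hmR]
          nlinarith [h3, hmR]
        exact le_of_pow_le_pow_left₀ two_ne_zero ht hsq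
      have hmpos : (0 : ℝ) < (m : ℝ) := by linarith
      have hEn : E (m + 1) = a + 1 / 2 - a ^ 2 / (2 * (m : ℝ)) := hrec
      have hcast2 : ((m + 1 : ℕ) : ℝ) = (m : ℝ) + 1 := by push_cast; ring
      rw [hEn, hcast2]
      have ha0 : 0 ≤ a := by linarith
      constructor
      · -- lower bound: sqrt (m + 2) - 1 ≤ ...
        rw [show (m : ℝ) + 1 + 1 = (m : ℝ) + 2 by ring]
        rw [← sub_nonneg]
        have h2m : (0 : ℝ) < 2 * (m : ℝ) := by linarith
        have expand : a + 1 / 2 - a ^ 2 / (2 * (m : ℝ)) - (Real.sqrt ((m : ℝ) + 2) - 1) =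
            (2 * (m : ℝ) * a + (m : ℝ) - a ^ 2 + 2 * (m : ℝ) - 2 * (m : ℝ) * Real.sqrt ((m : ℝ) + 2)) / (2 * (m : ℝ)) := by
          field_simp; ring
        rw [expand]
        apply div_nonneg _ (le_of_lt h2m)
        nlinarith [mul_nonneg (sub_nonneg.mpr hlo) (sub_nonneg.mpr (show a + (Real.sqrt ((m:ℝ)+1) - 1) ≤ 2 * (m:ℝ) by linarith))]
      · -- upper bound
        have expand : Real.sqrt ((m : ℝ) + 1) - (a + 1 / 2 - a ^ 2 / (2 * (m : ℝ))) =
            (2 * (m : ℝ) * Real.sqrt ((m : ℝ) + 1) - 2 * (m : ℝ) * a - (m : ℝ) + a ^ 2) / (2 * (m : ℝ)) := by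
          field_simp; ring
        rw [← sub_nonneg, expand]
        apply div_nonneg _ (by linarith)
        have hs12 : Real.sqrt (m : ℝ) ≤ Real.sqrt ((m : ℝ) + 1) := by nlinarith
        nlinarith [mul_nonneg (sub_nonneg.mpr hhi) (sub_nonneg.mpr (show a + Real.sqrt (m : ℝ) ≤ 2 * (m : ℝ) by linarith))]
end

section
/- Let E : ℕ → ℝ be defined by E(1) = 1/2 and E(n) = E(n−1) + 1/2 − E(n−1)^2/(2(n−1)) for all n ≥ 2. Then the sequence of thresholds τ_n = E(n)/n is non-increasing, i.e., E(n+1)/(n+1) ≤ E(n)/n for all n ≥ 1. -/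
private lemma E_invariant (E : ℕ → ℝ)
    (hE1 : E 1 = 1 / 2)
    (hErec : ∀ n, 2 ≤ n → E n = E (n - 1) + 1 / 2 - (E (n - 1)) ^ 2 / (2 * ((n : ℝ) - 1))) :
    ∀ n, 1 ≤ n → 0 ≤ E n ∧ E n ≤ (n : ℝ) / 2 ∧ (n : ℝ) + 1 ≤ (E n + 1) ^ 2 := by
  intro n hn
  induction n, hn using Nat.le_induction with
  | base => rw [hE1]; norm_num
  | succ n hn ih =>
    obtain ⟨h0, h1, h2⟩ := ih
    have hrec := hErec (n + 1) (by omega)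
    have hn1 : (n + 1 : ℕ) - 1 = n := by omega
    rw [hn1] at hrec
    have hcast : ((n + 1 : ℕ) : ℝ) - 1 = (n : ℝ) := by push_cast; ring
    rw [hcast] at hrec
    have hnR : (1 : ℝ) ≤ (n : ℝ) := by exact_mod_cast hn
    have hnpos : (0 : ℝ) < (n : ℝ) := by linarith
    have hrec' : E (n + 1) = E n + 1 / 2 - (E n) ^ 2 / (2 * (n : ℝ)) := hrec
    set x := E n with hx
    have hdiv : (E n) ^ 2 / (2 * (n : ℝ)) * (2 * (n : ℝ)) = (E n) ^ 2 := by
      field_simp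
    refine ⟨?_, ?_, ?_⟩
    · rw [hrec']
      have : x ^ 2 / (2 * (n : ℝ)) ≤ x / 4 := by
        rw [div_le_iff₀ (by linarith)]
        nlinarith
      linarith
    · rw [hrec']
      push_cast
      have : 0 ≤ x ^ 2 / (2 * (n : ℝ)) := by positivity
      nlinarith
    · rw [hrec']
      push_cast
      have key : ((x + 1/2 - x ^ 2 / (2 * (n:ℝ))) + 1) ^ 2 * (2 * (n:ℝ)) ^ 2
          ≥ ((n:ℝ) + 1 + 1) * (2 * (n:ℝ)) ^ 2 := by
        have hexp : (x + 1/2 - x ^ 2 / (2 * (n:ℝ))) * (2 * (n:ℝ)) =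
            2 * (n:ℝ) * x + (n:ℝ) - x ^ 2 := by
          field_simp
        have hsq : ((x + 1/2 - x ^ 2 / (2 * (n:ℝ))) + 1) ^ 2 * (2 * (n:ℝ)) ^ 2
            = (2 * (n:ℝ) * x + (n:ℝ) - x ^ 2 + 2 * (n:ℝ)) ^ 2 := by
          rw [← mul_pow]
          congr 1
          rw [add_mul, hexp]; ring
        rw [hsq]
        nlinarith [sq_nonneg (x + 1), sq_nonneg (x - (n:ℝ)), sq_nonneg ((x + 1)^2 - ((n:ℝ)+1)),
          sq_nonneg (2 * (n:ℝ) * x + (n:ℝ) - x ^ 2), mul_nonneg h0 (sq_nonneg (x - (n:ℝ))),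
          mul_nonneg (mul_nonneg h0 h0) (sq_nonneg (x - (n:ℝ)))]
      have hpos : (0:ℝ) < (2 * (n:ℝ)) ^ 2 := by positivity
      nlinarith [key]

/-- If `E 1 = 1/2` and `E n = E (n-1) + 1/2 - E (n-1)²/(2(n-1))` for
`n ≥ 2`, then the thresholds `τ_n = E n / n` are non-increasing:
`E (n+1)/(n+1) ≤ E n / n` for all `n ≥ 1`. -/
theorem thresholds_nonincreasing (E : ℕ → ℝ)
    (hE1 : E 1 = 1 / 2)
    (hErec : ∀ n, 2 ≤ n → E n = E (n - 1) + 1 / 2 - (E (n - 1)) ^ 2 / (2 * ((n : ℝ) - 1))) :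
    ∀ n, 1 ≤ n → E (n + 1) / ((n : ℝ) + 1) ≤ E n / (n : ℝ) := by
  intro n hn
  obtain ⟨h0, h1, h2⟩ := E_invariant E hE1 hErec n hn
  have hrec := hErec (n + 1) (by omega)
  have hn1 : (n + 1 : ℕ) - 1 = n := by omega
  rw [hn1] at hrec
  have hcast : ((n + 1 : ℕ) : ℝ) - 1 = (n : ℝ) := by push_cast; ring
  rw [hcast] at hrec
  have hnR : (1 : ℝ) ≤ (n : ℝ) := by exact_mod_cast hn
  have hnpos : (0 : ℝ) < (n : ℝ) := by linarith
  rw [hrec, div_le_div_iff₀ (by linarith) hnpos]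
  have hd : (E n) ^ 2 / (2 * (n : ℝ)) * (n : ℝ) = (E n) ^ 2 / 2 := by
    field_simp
  nlinarith [hd]
end

section
/- Let E : ℕ → ℝ be defined by E(1) = 1/2 and E(n) = E(n−1) + 1/2 − E(n−1)^2/(2(n−1)) for all n ≥ 2, and let H_m = sum_{i=1}^m 1/i be the m-th harmonic number. Then there exist constants c_1, c_2 > 0 and N ∈ ℕ such that for all n ≥ N: c_1·√n/ln(n) ≤ E(n)/(H_{n+1} − 1) ≤ c_2·√n/ln(n). That is, the competitive ratio of the best online algorithm for sequential employment with uniform costs is Θ(√n / log n). -/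
lemma E_bounds (E : ℕ → ℝ) (hE1 : E 1 = 1 / 2)
    (hErec : ∀ n, 2 ≤ n → E n = E (n - 1) + 1 / 2 - (E (n - 1)) ^ 2 / (2 * ((n : ℝ) - 1))) :
    ∀ n : ℕ, 1 ≤ n → Real.sqrt n / 2 ≤ E n ∧ E n ≤ Real.sqrt n := by
  intro n hn
  induction n, hn using Nat.le_induction with
  | base => rw [hE1]; norm_num
  | succ n hn ih =>
    obtain ⟨ihl, ihu⟩ := ih
    have hrec := hErec (n + 1) (by omega)
    have hsub : n + 1 - 1 = n := by omega
    rw [hsub] at hrec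
    have hcast : ((n + 1 : ℕ) : ℝ) - 1 = (n : ℝ) := by push_cast; ring
    rw [hcast] at hrec
    have hgcast : ((n + 1 : ℕ) : ℝ) = (n : ℝ) + 1 := by push_cast; ring
    rw [hrec, hgcast]
    set s := Real.sqrt n with hs
    set t := Real.sqrt ((n : ℝ) + 1) with ht
    set y := E n with hy
    have hn1 : (1 : ℝ) ≤ (n : ℝ) := by exact_mod_cast hn
    have hs2 : s ^ 2 = n := Real.sq_sqrt (by linarith)
    have ht2 : t ^ 2 = ((n : ℝ) + 1) := Real.sq_sqrt (by linarith)
    have hs1 : (1 : ℝ) ≤ s := by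
      rw [hs, show (1:ℝ) = Real.sqrt 1 by simp]
      exact Real.sqrt_le_sqrt hn1
    have ht0 : 0 ≤ t := Real.sqrt_nonneg _
    have hnpos : (0 : ℝ) < (n : ℝ) := by linarith
    have hy0 : 0 ≤ y := by linarith
    have e1 : y + 1 / 2 - y ^ 2 / (2 * (n : ℝ))
        = (2 * (n : ℝ) * y + (n : ℝ) - y ^ 2) / (2 * (n : ℝ)) := by
      field_simp
    rw [e1]
    clear_value s t y
    clear hrec hy hs ht hE1 hErec e1
    constructor
    · -- lower bound
      have h2 : t ≤ s + 1 / 2 := by nlinarith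
      rw [div_le_div_iff₀ (by norm_num) (by positivity)]
      rw [← hs2]
      nlinarith [mul_nonneg (mul_nonneg (show (0:ℝ) ≤ s by linarith)
          (sub_nonneg.2 ihl)) (show (0:ℝ) ≤ 2 * s - 1 by linarith),
        mul_nonneg hy0 (sub_nonneg.2 ihu),
        mul_nonneg (sq_nonneg s) (sub_nonneg.2 h2)]
    · -- upper bound
      have h2 : s ≤ t := by nlinarith
      rw [div_le_iff₀ (by positivity)]
      rw [← hs2]
      nlinarith [mul_nonneg (sub_nonneg.2 ihu)
          (show (0:ℝ) ≤ 2 * s ^ 2 - s - y by nlinarith),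
        mul_nonneg (sq_nonneg s) (sub_nonneg.2 h2)]

/-- With `E` as in the recursion `E 1 = 1/2`,
`E n = E (n-1) + 1/2 - E (n-1)²/(2(n-1))` and `H_m` the `m`-th harmonic number, there are
constants `c₁, c₂ > 0` and `N` such that for all `n ≥ N`,
`c₁·√n/ln n ≤ E n / (H_{n+1} - 1) ≤ c₂·√n/ln n`: the competitive ratio for sequential
employment with uniform costs is `Θ(√n / log n)`. -/
theorem sequential_competitive_ratio_theta (E : ℕ → ℝ)
    (hE1 : E 1 = 1 / 2)
    (hErec : ∀ n, 2 ≤ n → E n = E (n - 1) + 1 / 2 - (E (n - 1)) ^ 2 / (2 * ((n : ℝ) - 1))) :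
    ∃ c₁ c₂ : ℝ, 0 < c₁ ∧ 0 < c₂ ∧ ∃ N : ℕ, ∀ n, N ≤ n →
      c₁ * Real.sqrt n / Real.log n
          ≤ E n / ((∑ i ∈ Finset.range (n + 1), (1 : ℝ) / (i + 1)) - 1)
      ∧ E n / ((∑ i ∈ Finset.range (n + 1), (1 : ℝ) / (i + 1)) - 1)
          ≤ c₂ * Real.sqrt n / Real.log n := by
  refine ⟨1/4, 2, by norm_num, by norm_num, 9, fun n hn => ?_⟩
  obtain ⟨hEl, hEu⟩ := E_bounds E hE1 hErec n (by omega)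
  have hsum : (∑ i ∈ Finset.range (n + 1), (1 : ℝ) / (i + 1)) = ((harmonic (n+1) : ℚ) : ℝ) := by
    rw [harmonic]
    push_cast
    simp [one_div]
  set t := Real.sqrt n with hts
  set L := Real.log n with hLs
  set H := (∑ i ∈ Finset.range (n + 1), (1 : ℝ) / (i + 1)) - 1 with hHs
  have hn9 : (9 : ℝ) ≤ (n : ℝ) := by exact_mod_cast hn
  have hnpos : (0 : ℝ) < (n : ℝ) := by linarith
  have hL2 : (2 : ℝ) ≤ L := by
    rw [hLs, Real.le_log_iff_exp_le hnpos]
    have h1 := Real.exp_one_lt_d9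
    have h2 : Real.exp 2 = Real.exp 1 * Real.exp 1 := by
      rw [← Real.exp_add]; norm_num
    nlinarith [Real.exp_pos 1]
  have ht0 : 0 ≤ t := Real.sqrt_nonneg _
  -- lower bound for H
  have hHl : L / 2 ≤ H := by
    have h1 := log_add_one_le_harmonic (n+1)
    have h2 : Real.log n ≤ Real.log ((n:ℝ)+1+1) := by
      apply Real.log_le_log hnpos; push_cast; linarith
    rw [hHs, hsum]
    push_cast at h1 ⊢
    rw [← hLs] at h2
    linarith
  -- upper bound for H
  have hHu : H ≤ 2 * L := by
    have h1 := harmonic_le_one_add_log (n+1)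
    have h2 : Real.log ((n:ℝ)+1) ≤ Real.log ((n:ℝ)^2) := by
      apply Real.log_le_log (by linarith); nlinarith
    have h3 : Real.log ((n:ℝ)^2) = 2 * L := by
      rw [hLs, Real.log_pow]; norm_num
    rw [hHs, hsum]
    push_cast at h1 ⊢
    linarith
  clear_value t L H
  have hLpos : (0 : ℝ) < L := by linarith
  have hHpos : 0 < H := by linarith
  constructor
  · rw [div_le_div_iff₀ hLpos hHpos]
    nlinarith [mul_nonneg ht0 (sub_nonneg.2 hHu), mul_nonneg (sub_nonneg.2 hEl) hLpos.le]
  · rw [div_le_div_iff₀ hHpos hLpos]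
    nlinarith [mul_nonneg ht0 (sub_nonneg.2 hHl), mul_nonneg (sub_nonneg.2 hEu) hLpos.le]
end
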